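/- arXiv:2002.11632 — 8 statements merged into one kernel-verified Lean document; each statement's English description precedes it below -/
import Mathlib

section
/- Let φ : X → H be a weakly measurable function that is a Bessel mapping with bound M but not μ-total. Then there is no injective positive self-adjoint operator G on H with φ_x ∈ D(G) for a.e. x such that Gφ (x ↦ Gφ_x) is a continuous frame for H. -/
/-!
Suppose `G` existed and let `f ≠ 0` annihilate `φ_x` for a.e. `x`. Since `G` is symmetric,
`⟨g, Gφ_x⟩ = ⟨Gg - f, φ_x⟩` a.e., so the lower frame bound and the Bessel bound give
`m ‖g‖² ≤ M ‖Gg - f‖²` for every `g ∈ D(G)`. The range of `G` is dense (its orthogonal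
complement is `ker G* = ker G = 0`), so there are `g_n ∈ D(G)` with `Gg_n → f`, and then
`g_n → 0`. As `G` is closed, `f = G 0 = 0`.
-/

open MeasureTheory
open scoped ENNReal NNReal

local notation "⟪" x ", " y "⟫" => @inner ℂ _ _ x y

/-- A densely defined operator `T` is self-adjoint: symmetric, and every weak-adjoint pair
belongs to its graph. -/
def IsSelfAdjointPMap {H : Type*} [NormedAddCommGroup H] [InnerProductSpace ℂ H]
    (T : H →ₗ.[ℂ] H) : Prop :=
  Dense (T.domain : Set H) ∧
  (∀ f g : T.domain, ⟪T f, (g : H)⟫ = ⟪(f : H), T g⟫) ∧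
  (∀ g h : H, (∀ f : T.domain, ⟪T f, g⟫ = ⟪(f : H), h⟫) →
    ∃ hg : g ∈ T.domain, T ⟨g, hg⟩ = h)

open Filter Topology

namespace LinearPMap

variable {H : Type*} [NormedAddCommGroup H] [InnerProductSpace ℂ H] {T : H →ₗ.[ℂ] H}

theorem dense_range_of_injective [CompleteSpace H]
    (hadj : ∀ g h : H, (∀ f : T.domain, ⟪T f, g⟫ = ⟪(f : H), h⟫) →
      ∃ hg : g ∈ T.domain, T ⟨g, hg⟩ = h)
    (hinj : ∀ f : T.domain, T f = 0 → (f : H) = 0) :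
    Dense (Set.range T) := by
  change Dense (LinearMap.range T.toFun : Set H)
  rw [Submodule.dense_iff_topologicalClosure_eq_top, Submodule.topologicalClosure_eq_top_iff,
    Submodule.eq_bot_iff]
  intro h hh
  obtain ⟨hdom, hTh⟩ := hadj h 0 fun u => by
    rw [inner_zero_right]
    exact hh (T u) ⟨u, rfl⟩
  exact hinj ⟨h, hdom⟩ hTh

/-- Closedness of `T`, which it inherits from `T* ⊆ T`. -/
theorem eq_zero_of_tendsto {ι : Type*} {l : Filter ι} [l.NeBot]
    (hsym : ∀ f g : T.domain, ⟪T f, (g : H)⟫ = ⟪(f : H), T g⟫)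
    (hadj : ∀ g h : H, (∀ f : T.domain, ⟪T f, g⟫ = ⟪(f : H), h⟫) →
      ∃ hg : g ∈ T.domain, T ⟨g, hg⟩ = h)
    {g : ι → T.domain} {f : H} (hg : Tendsto (fun i => (g i : H)) l (𝓝 0))
    (hTg : Tendsto (fun i => T (g i)) l (𝓝 f)) :
    f = 0 := by
  obtain ⟨h0, hT0⟩ := hadj 0 f fun u => by
    have hlim₁ : Tendsto (fun i => ⟪(u : H), T (g i)⟫) l (𝓝 ⟪(u : H), f⟫) :=
      tendsto_const_nhds.inner (𝕜 := ℂ) hTg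
    have hlim₂ : Tendsto (fun i => ⟪(u : H), T (g i)⟫) l (𝓝 ⟪T u, 0⟫) := by
      simpa only [hsym] using (tendsto_const_nhds (x := T u)).inner (𝕜 := ℂ) hg
    exact tendsto_nhds_unique hlim₂ hlim₁
  rw [← hT0, show (⟨0, h0⟩ : T.domain) = 0 from rfl, map_zero]

end LinearPMap

section Frames

variable {H X : Type*} [NormedAddCommGroup H] [InnerProductSpace ℂ H] [MeasurableSpace X]
  {μ : Measure X} {φ : X → H}

theorem lintegral_nnnorm_inner_sub_sq_of_ae_inner_eq_zero {f : H}
    (hf : ∀ᵐ x ∂μ, ⟪f, φ x⟫ = 0) (h : H) :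
    ∫⁻ x, (‖⟪h - f, φ x⟫‖₊ : ℝ≥0∞) ^ 2 ∂μ = ∫⁻ x, (‖⟪h, φ x⟫‖₊ : ℝ≥0∞) ^ 2 ∂μ := by
  refine lintegral_congr_ae ?_
  filter_upwards [hf] with x hx
  rw [inner_sub_left, hx, sub_zero]

theorem norm_le_of_frame_of_bessel {T : H →ₗ.[ℂ] H} (hmem : ∀ x, φ x ∈ T.domain)
    (hsym : ∀ f g : T.domain, ⟪T f, (g : H)⟫ = ⟪(f : H), T g⟫)
    {m M : ℝ} (hm : 0 < m)
    (hframe : ∀ f : H, ENNReal.ofReal (m * ‖f‖ ^ 2) ≤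
      ∫⁻ x, (‖⟪f, T ⟨φ x, hmem x⟩⟫‖₊ : ℝ≥0∞) ^ 2 ∂μ)
    (hbessel : ∀ f : H,
      ∫⁻ x, (‖⟪f, φ x⟫‖₊ : ℝ≥0∞) ^ 2 ∂μ ≤ ENNReal.ofReal (M * ‖f‖ ^ 2))
    {f : H} (hf : ∀ᵐ x ∂μ, ⟪f, φ x⟫ = 0) (g : T.domain) :
    ‖(g : H)‖ ≤ √(|M| / m) * ‖T g - f‖ := by
  have hsq : m * ‖(g : H)‖ ^ 2 ≤ |M| * ‖T g - f‖ ^ 2 := by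
    refine (ENNReal.ofReal_le_ofReal_iff (by positivity)).1 ?_
    calc ENNReal.ofReal (m * ‖(g : H)‖ ^ 2)
        ≤ ∫⁻ x, (‖⟪(g : H), T ⟨φ x, hmem x⟩⟫‖₊ : ℝ≥0∞) ^ 2 ∂μ := hframe g
      _ = ∫⁻ x, (‖⟪T g - f, φ x⟫‖₊ : ℝ≥0∞) ^ 2 ∂μ := by
        simp only [← hsym, lintegral_nnnorm_inner_sub_sq_of_ae_inner_eq_zero hf]
      _ ≤ ENNReal.ofReal (M * ‖T g - f‖ ^ 2) := hbessel _
      _ ≤ ENNReal.ofReal (|M| * ‖T g - f‖ ^ 2) := by gcongr; exact le_abs_self M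
  calc ‖(g : H)‖ = √(‖(g : H)‖ ^ 2) := (Real.sqrt_sq (norm_nonneg _)).symm
    _ ≤ √(|M| / m * ‖T g - f‖ ^ 2) := by
      gcongr
      rw [div_mul_eq_mul_div, le_div_iff₀ hm]
      linarith
    _ = √(|M| / m) * ‖T g - f‖ := by
      rw [Real.sqrt_mul (by positivity), Real.sqrt_sq (norm_nonneg _)]

end Frames

theorem stmt5_general {H X : Type*}
    [NormedAddCommGroup H] [InnerProductSpace ℂ H] [CompleteSpace H]
    [MeasurableSpace X] (μ : Measure X) (φ : X → H)
    (M : ℝ) (hbessel : ∀ f : H,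
      ∫⁻ x, (‖⟪f, φ x⟫‖₊ : ℝ≥0∞) ^ 2 ∂μ ≤ ENNReal.ofReal (M * ‖f‖ ^ 2))
    (hnontotal : ∃ f : H, f ≠ 0 ∧ ∀ᵐ x ∂μ, ⟪f, φ x⟫ = 0) :
    ¬ ∃ (G : H →ₗ.[ℂ] H) (hmem : ∀ x, φ x ∈ G.domain),
      IsSelfAdjointPMap G ∧
      (∀ f : G.domain, 0 ≤ (⟪G f, (f : H)⟫).re) ∧
      (∀ f : G.domain, G f = 0 → (f : H) = 0) ∧
      ∃ m' M' : ℝ, 0 < m' ∧ ∀ f : H,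
        ENNReal.ofReal (m' * ‖f‖ ^ 2) ≤
            ∫⁻ x, (‖⟪f, G ⟨φ x, hmem x⟩⟫‖₊ : ℝ≥0∞) ^ 2 ∂μ ∧
        ∫⁻ x, (‖⟪f, G ⟨φ x, hmem x⟩⟫‖₊ : ℝ≥0∞) ^ 2 ∂μ ≤ ENNReal.ofReal (M' * ‖f‖ ^ 2) := by
  rintro ⟨G, hmem, ⟨-, hsym, hadj⟩, -, hinj, m', M', hm', hframe⟩
  obtain ⟨f, hf0, hf⟩ := hnontotal
  obtain ⟨y, hy_range, hy⟩ :=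
    mem_closure_iff_seq_limit.1 (G.dense_range_of_injective hadj hinj f)
  choose g hGg using hy_range
  have hGg_lim : Tendsto (fun n => G (g n)) atTop (𝓝 f) := by simpa only [hGg] using hy
  have hg_lim : Tendsto (fun n => (g n : H)) atTop (𝓝 0) := by
    refine squeeze_zero_norm (fun n => norm_le_of_frame_of_bessel hmem hsym hm'
      (fun h => (hframe h).1) hbessel hf (g n)) ?_
    simpa using (tendsto_iff_norm_sub_tendsto_zero.1 hGg_lim).const_mul √(|M| / m')
  exact hf0 (LinearPMap.eq_zero_of_tendsto hsym hadj hg_lim hGg_lim)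

/-- if `φ` is a weakly measurable Bessel mapping (bound `M`) which is not
`μ`-total, then no injective positive self-adjoint operator `G` with `φ_x ∈ D(G)` turns `φ`
into a continuous frame `Gφ`. -/
theorem stmt5 {H X : Type*}
    [NormedAddCommGroup H] [InnerProductSpace ℂ H] [CompleteSpace H]
    [MeasurableSpace X] (μ : Measure X) (φ : X → H)
    (hwm : ∀ f : H, AEStronglyMeasurable (fun x => ⟪f, φ x⟫) μ)
    (M : ℝ) (hbessel : ∀ f : H,
      ∫⁻ x, (‖⟪f, φ x⟫‖₊ : ℝ≥0∞) ^ 2 ∂μ ≤ ENNReal.ofReal (M * ‖f‖ ^ 2))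
    (hnontotal : ∃ f : H, f ≠ 0 ∧ ∀ᵐ x ∂μ, ⟪f, φ x⟫ = 0) :
    ¬ ∃ (G : H →ₗ.[ℂ] H) (hmem : ∀ x, φ x ∈ G.domain),
      IsSelfAdjointPMap G ∧
      (∀ f : G.domain, 0 ≤ (⟪G f, (f : H)⟫).re) ∧
      (∀ f : G.domain, G f = 0 → (f : H) = 0) ∧
      ∃ m' M' : ℝ, 0 < m' ∧ ∀ f : H,
        ENNReal.ofReal (m' * ‖f‖ ^ 2) ≤
            ∫⁻ x, (‖⟪f, G ⟨φ x, hmem x⟩⟫‖₊ : ℝ≥0∞) ^ 2 ∂μ ∧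
        ∫⁻ x, (‖⟪f, G ⟨φ x, hmem x⟩⟫‖₊ : ℝ≥0∞) ^ 2 ∂μ ≤ ENNReal.ofReal (M' * ‖f‖ ^ 2) :=
  stmt5_general μ φ M hbessel hnontotal
end

section
/- Let φ : X → H be weakly measurable and suppose there exists an injective positive self-adjoint operator G on H with bounded inverse G⁻¹ such that φ_x ∈ D(G) for a.e. x and Gφ is a continuous frame for H. Then φ is μ-total. -/
open MeasureTheory
open scoped ENNReal NNReal

local notation "⟪" x ", " y "⟫" => @inner ℂ _ _ x y

theorem inner_apply_right_inverse_eq_of_symmetric {𝕜 H : Type*} [RCLike 𝕜]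
    [NormedAddCommGroup H] [InnerProductSpace 𝕜 H] {T : H →ₗ.[𝕜] H}
    (hsymm : ∀ f g : T.domain, inner 𝕜 (T f) (g : H) = inner 𝕜 (f : H) (T g))
    {S : H → H} (hS : ∀ g, S g ∈ T.domain) (hTS : ∀ g, T ⟨S g, hS g⟩ = g) (g : H) (v : T.domain) :
    inner 𝕜 (S g) (T v) = inner 𝕜 g (v : H) := by
  rw [← hsymm ⟨S g, hS g⟩ v, hTS]

theorem eq_zero_of_ae_inner_eq_zero_of_lower_frame_bound {𝕜 H X : Type*} [RCLike 𝕜]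
    [NormedAddCommGroup H] [InnerProductSpace 𝕜 H] [MeasurableSpace X] {μ : Measure X}
    {ψ : X → H} {m : ℝ} (hm : 0 < m)
    (hlower : ∀ f : H, ENNReal.ofReal (m * ‖f‖ ^ 2) ≤ ∫⁻ x, (‖inner 𝕜 f (ψ x)‖₊ : ℝ≥0∞) ^ 2 ∂μ)
    {f : H} (hf : ∀ᵐ x ∂μ, inner 𝕜 f (ψ x) = 0) : f = 0 := by
  have hvanish : ∫⁻ x, (‖inner 𝕜 f (ψ x)‖₊ : ℝ≥0∞) ^ 2 ∂μ = 0 := by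
    rw [← lintegral_zero (μ := μ)]
    refine lintegral_congr_ae ?_
    filter_upwards [hf] with x hx
    simp [hx]
  have hle : m * ‖f‖ ^ 2 ≤ 0 := by
    simpa [hvanish] using hlower f
  have hnorm : ‖f‖ ^ 2 ≤ 0 := nonpos_of_mul_nonpos_right hle hm
  simpa using pow_eq_zero_iff two_ne_zero |>.mp (le_antisymm hnorm (sq_nonneg _))

theorem stmt6_general {H X : Type*}
    [NormedAddCommGroup H] [InnerProductSpace ℂ H]
    [MeasurableSpace X] (μ : Measure X) (φ : X → H)
    (G : H →ₗ.[ℂ] H) (hmem : ∀ x, φ x ∈ G.domain)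
    (hsa : IsSelfAdjointPMap G)
    (Ginv : H →L[ℂ] H)
    (hGmem : ∀ g : H, Ginv g ∈ G.domain)
    (hright : ∀ g : H, G ⟨Ginv g, hGmem g⟩ = g)
    (m' M' : ℝ) (hm' : 0 < m')
    (hframe : ∀ f : H,
      ENNReal.ofReal (m' * ‖f‖ ^ 2) ≤
          ∫⁻ x, (‖⟪f, G ⟨φ x, hmem x⟩⟫‖₊ : ℝ≥0∞) ^ 2 ∂μ ∧
      ∫⁻ x, (‖⟪f, G ⟨φ x, hmem x⟩⟫‖₊ : ℝ≥0∞) ^ 2 ∂μ ≤ ENNReal.ofReal (M' * ‖f‖ ^ 2)) :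
    ∀ f : H, (∀ᵐ x ∂μ, ⟪f, φ x⟫ = 0) → f = 0 := by
  intro f hf
  have hGφ : ∀ᵐ x ∂μ, ⟪Ginv f, G ⟨φ x, hmem x⟩⟫ = 0 := by
    filter_upwards [hf] with x hx
    rw [inner_apply_right_inverse_eq_of_symmetric hsa.2.1 hGmem hright]
    exact hx
  have hGinv : Ginv f = 0 :=
    eq_zero_of_ae_inner_eq_zero_of_lower_frame_bound hm' (fun g => (hframe g).1) hGφ
  have hzero : (⟨Ginv f, hGmem f⟩ : G.domain) = 0 := Subtype.ext hGinv
  rw [← hright f, hzero, G.map_zero]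

/-- if there is an injective positive self-adjoint `G` with bounded (two-sided)
inverse `G⁻¹` such that `φ_x ∈ D(G)` and `Gφ` is a continuous frame for `H`, then `φ` is
`μ`-total. -/
theorem stmt6 {H X : Type*}
    [NormedAddCommGroup H] [InnerProductSpace ℂ H] [CompleteSpace H]
    [MeasurableSpace X] (μ : Measure X) (φ : X → H)
    (hwm : ∀ f : H, AEStronglyMeasurable (fun x => ⟪f, φ x⟫) μ)
    (G : H →ₗ.[ℂ] H) (hmem : ∀ x, φ x ∈ G.domain)
    (hsa : IsSelfAdjointPMap G)
    (hpos : ∀ f : G.domain, 0 ≤ (⟪G f, (f : H)⟫).re)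
    (hinj : ∀ f : G.domain, G f = 0 → (f : H) = 0)
    (Ginv : H →L[ℂ] H)
    (hGmem : ∀ g : H, Ginv g ∈ G.domain)
    (hright : ∀ g : H, G ⟨Ginv g, hGmem g⟩ = g)
    (hleft : ∀ f : G.domain, Ginv (G f) = (f : H))
    (m' M' : ℝ) (hm' : 0 < m')
    (hframe : ∀ f : H,
      ENNReal.ofReal (m' * ‖f‖ ^ 2) ≤
          ∫⁻ x, (‖⟪f, G ⟨φ x, hmem x⟩⟫‖₊ : ℝ≥0∞) ^ 2 ∂μ ∧
      ∫⁻ x, (‖⟪f, G ⟨φ x, hmem x⟩⟫‖₊ : ℝ≥0∞) ^ 2 ∂μ ≤ ENNReal.ofReal (M' * ‖f‖ ^ 2)) :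
    ∀ f : H, (∀ᵐ x ∂μ, ⟪f, φ x⟫ = 0) → f = 0 :=
  stmt6_general μ φ G hmem hsa Ginv hGmem hright m' M' hm' hframe
end

section
/- Let φ : X → H be weakly measurable with analysis domain D(C_φ) = {f : ∫ |⟨f, φ_x⟩|² dμ < ∞} not dense in H. Then there is no injective positive self-adjoint operator G on H with φ_x ∈ D(G) for a.e. x such that Gφ is a continuous frame for H. -/
open MeasureTheory
open scoped ENNReal NNReal

local notation "⟪" x ", " y "⟫" => @inner ℂ _ _ x y

/-- if the analysis domain `D(C_φ) = {f : ∫ |⟨f, φ_x⟩|² dμ < ∞}` is not dense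
in `H`, then no injective positive self-adjoint operator `G` with `φ_x ∈ D(G)` makes `Gφ` a
continuous frame for `H`. -/
theorem stmt7 {H X : Type*}
    [NormedAddCommGroup H] [InnerProductSpace ℂ H] [CompleteSpace H]
    [MeasurableSpace X] (μ : Measure X) (φ : X → H)
    (hwm : ∀ f : H, AEStronglyMeasurable (fun x => ⟪f, φ x⟫) μ)
    (hnotdense : ¬ Dense {f : H | ∫⁻ x, (‖⟪f, φ x⟫‖₊ : ℝ≥0∞) ^ 2 ∂μ < ∞}) :
    ¬ ∃ (G : H →ₗ.[ℂ] H) (hmem : ∀ x, φ x ∈ G.domain),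
      IsSelfAdjointPMap G ∧
      (∀ f : G.domain, 0 ≤ (⟪G f, (f : H)⟫).re) ∧
      (∀ f : G.domain, G f = 0 → (f : H) = 0) ∧
      ∃ m' M' : ℝ, 0 < m' ∧ ∀ f : H,
        ENNReal.ofReal (m' * ‖f‖ ^ 2) ≤
            ∫⁻ x, (‖⟪f, G ⟨φ x, hmem x⟩⟫‖₊ : ℝ≥0∞) ^ 2 ∂μ ∧
        ∫⁻ x, (‖⟪f, G ⟨φ x, hmem x⟩⟫‖₊ : ℝ≥0∞) ^ 2 ∂μ ≤ ENNReal.ofReal (M' * ‖f‖ ^ 2) := by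
  rintro ⟨G, hmem, ⟨hGdense, hsym, hadj⟩, hpos, hinj, m', M', hm', hframe⟩
  -- the range of G is dense
  have hbot : (LinearMap.range G.toFun)ᗮ = ⊥ := by
    rw [Submodule.eq_bot_iff]
    intro h hh
    have h0 : ∀ f : G.domain, ⟪G f, h⟫ = ⟪(f : H), (0 : H)⟫ := by
      intro f
      rw [inner_zero_right]
      exact (Submodule.mem_orthogonal _ _).mp hh (G f) ⟨f, rfl⟩
    obtain ⟨hg, hG0⟩ := hadj h 0 h0
    exact hinj ⟨h, hg⟩ hG0
  have hrange : Dense ((LinearMap.range G.toFun : Submodule ℂ H) : Set H) := by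
    have := (Submodule.topologicalClosure_eq_top_iff (K := LinearMap.range G.toFun)).mpr hbot
    rw [Submodule.dense_iff_topologicalClosure_eq_top]
    exact this
  -- the range of G is contained in the analysis domain
  have hsub : ((LinearMap.range G.toFun : Submodule ℂ H) : Set H) ⊆
      {f : H | ∫⁻ x, (‖⟪f, φ x⟫‖₊ : ℝ≥0∞) ^ 2 ∂μ < ∞} := by
    rintro f ⟨g, rfl⟩
    have key : ∫⁻ x, (‖⟪G.toFun g, φ x⟫‖₊ : ℝ≥0∞) ^ 2 ∂μ
        = ∫⁻ x, (‖⟪(g : H), G ⟨φ x, hmem x⟩⟫‖₊ : ℝ≥0∞) ^ 2 ∂μ := by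
      refine lintegral_congr fun x => ?_
      rw [show ⟪G.toFun g, φ x⟫ = ⟪(g : H), G ⟨φ x, hmem x⟩⟫ from hsym g ⟨φ x, hmem x⟩]
    refine lt_of_le_of_lt ?_ (ENNReal.ofReal_lt_top (r := M' * ‖(g : H)‖ ^ 2))
    exact key.trans_le (hframe g).2
  exact hnotdense (hrange.mono hsub)
end

section
/- Let C : D(C) ⊆ H → L²(X, μ) be the analysis operator of a lower semi-frame φ with D(C) dense, and T = C*C with m ≤ T (in form sense, m > 0). Define ψ_x = T⁻¹φ_x (weakly: ⟨f, ψ_x⟩ := ⟨T⁻¹f, φ_x⟩). Then ψ is a Bessel mapping with bound ‖T^{-1/2}‖² ≤ 1/m: for all f ∈ H, ∫ |⟨T⁻¹f, φ_x⟩|² dμ(x) = ‖T^{-1/2} f‖² ≤ (1/m)‖f‖². -/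
open MeasureTheory
open scoped ENNReal NNReal

local notation "⟪" x ", " y "⟫" => @inner ℂ _ _ x y

/-!
With `g = T⁻¹f ∈ D(T)`, the form identity gives `⟨f, g⟩ = ⟨Tg, g⟩ = ∫ |⟨g, φ_x⟩|²`, while
`T⁻¹ = (T^{-1/2})²` with `T^{-1/2}` self-adjoint gives `⟨f, g⟩ = ‖T^{-1/2}f‖²`. The lower frame
bound then reads `m‖g‖² ≤ ‖T^{-1/2}f‖² = ⟨f, g⟩ ≤ ‖f‖‖g‖`, hence `m‖g‖ ≤ ‖f‖` and
`‖T^{-1/2}f‖² ≤ ‖f‖‖g‖ ≤ ‖f‖²/m`.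
-/

theorem lintegral_nnnorm_sq_eq_ofReal_integral {X E : Type*} [MeasurableSpace X] {μ : Measure X}
    [NormedAddCommGroup E] {h : X → E} (hh : AEStronglyMeasurable h μ)
    (hfin : ∫⁻ x, (‖h x‖₊ : ℝ≥0∞) ^ 2 ∂μ < ∞) :
    ∫⁻ x, (‖h x‖₊ : ℝ≥0∞) ^ 2 ∂μ = ENNReal.ofReal (∫ x, ‖h x‖ ^ 2 ∂μ) := by
  have hsq : ∀ x, ENNReal.ofReal (‖h x‖ ^ 2) = (‖h x‖₊ : ℝ≥0∞) ^ 2 := fun x => by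
    rw [ENNReal.ofReal_pow (norm_nonneg _), ofReal_norm, enorm_eq_nnnorm]
  have hmeas : AEStronglyMeasurable (fun x => ‖h x‖ ^ 2) μ := hh.norm.pow 2
  rw [integral_eq_lintegral_of_nonneg_ae (.of_forall fun x => by positivity) hmeas,
    ENNReal.ofReal_toReal] <;> simp only [hsq]
  exact hfin.ne

theorem integral_mul_conj_eq_ofReal {X : Type*} [MeasurableSpace X] (μ : Measure X) (h : X → ℂ) :
    ∫ x, h x * starRingEnd ℂ (h x) ∂μ = ((∫ x, ‖h x‖ ^ 2 ∂μ : ℝ) : ℂ) := by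
  simp only [Complex.mul_conj']
  exact_mod_cast integral_complex_ofReal

theorem inner_apply_self_eq_integral_of_form {H X : Type*} [NormedAddCommGroup H]
    [InnerProductSpace ℂ H] [MeasurableSpace X] {μ : Measure X} {φ : X → H} {T : H →ₗ.[ℂ] H}
    (hT : ∀ (f : T.domain) (g : H), ∫⁻ x, (‖⟪g, φ x⟫‖₊ : ℝ≥0∞) ^ 2 ∂μ < ∞ →
      ⟪T f, g⟫ = ∫ x, ⟪(f : H), φ x⟫ * ⟪φ x, g⟫ ∂μ)
    (g : T.domain) (hg : ∫⁻ x, (‖⟪(g : H), φ x⟫‖₊ : ℝ≥0∞) ^ 2 ∂μ < ∞) :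
    ⟪T g, g⟫ = ((∫ x, ‖⟪(g : H), φ x⟫‖ ^ 2 ∂μ : ℝ) : ℂ) := by
  simp only [hT g g hg, ← integral_mul_conj_eq_ofReal, inner_conj_symm]

theorem inner_apply_apply_self {H : Type*} [NormedAddCommGroup H] [InnerProductSpace ℂ H]
    [CompleteSpace H] {A : H →L[ℂ] H} (hA : IsSelfAdjoint A) (f : H) :
    ⟪f, A (A f)⟫ = ((‖A f‖ ^ 2 : ℝ) : ℂ) := by
  rw [show ⟪f, A (A f)⟫ = ⟪A f, A f⟫ from (hA.isSymmetric f (A f)).symm]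
  exact_mod_cast inner_self_eq_norm_sq_to_K (A f)

theorem le_one_div_mul_sq_of_mul_sq_le_of_le_mul {a b c m : ℝ} (hm : 0 < m)
    (hlow : m * b ^ 2 ≤ a) (hup : a ≤ c * b) : a ≤ 1 / m * c ^ 2 := by
  rw [div_mul_eq_mul_div, le_div_iff₀ hm, one_mul]
  nlinarith [sq_nonneg (c - m * b)]

theorem stmt8_general {H X : Type*}
    [NormedAddCommGroup H] [InnerProductSpace ℂ H] [CompleteSpace H]
    [MeasurableSpace X] (μ : Measure X) (φ : X → H)
    (hwm : ∀ f : H, AEStronglyMeasurable (fun x => ⟪f, φ x⟫) μ)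
    (m : ℝ) (hm : 0 < m)
    (hlow : ∀ f : H,
      ENNReal.ofReal (m * ‖f‖ ^ 2) ≤ ∫⁻ x, (‖⟪f, φ x⟫‖₊ : ℝ≥0∞) ^ 2 ∂μ)
    (T : H →ₗ.[ℂ] H)
    (hTdom : ∀ f : T.domain, ∫⁻ x, (‖⟪(f : H), φ x⟫‖₊ : ℝ≥0∞) ^ 2 ∂μ < ∞)
    (hT : ∀ (f : T.domain) (g : H), ∫⁻ x, (‖⟪g, φ x⟫‖₊ : ℝ≥0∞) ^ 2 ∂μ < ∞ →
      ⟪T f, g⟫ = ∫ x, ⟪(f : H), φ x⟫ * ⟪φ x, g⟫ ∂μ)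
    (Tinv : H →L[ℂ] H)
    (hmem : ∀ g : H, Tinv g ∈ T.domain)
    (hright : ∀ g : H, T ⟨Tinv g, hmem g⟩ = g)
    (Tinvhalf : H →L[ℂ] H) (hsahalf : IsSelfAdjoint Tinvhalf)
    (hsqr : ∀ f : H, Tinvhalf (Tinvhalf f) = Tinv f) :
    ∀ f : H,
      ∫⁻ x, (‖⟪Tinv f, φ x⟫‖₊ : ℝ≥0∞) ^ 2 ∂μ = ENNReal.ofReal (‖Tinvhalf f‖ ^ 2) ∧
      ‖Tinvhalf f‖ ^ 2 ≤ (1 / m) * ‖f‖ ^ 2 := by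
  intro f
  let g : T.domain := ⟨Tinv f, hmem f⟩
  have hform : ⟪f, Tinv f⟫ = ((∫ x, ‖⟪Tinv f, φ x⟫‖ ^ 2 ∂μ : ℝ) : ℂ) := by
    simpa only [g, hright] using inner_apply_self_eq_integral_of_form hT g (hTdom g)
  have hroot : ⟪f, Tinv f⟫ = ((‖Tinvhalf f‖ ^ 2 : ℝ) : ℂ) := by
    rw [← hsqr, inner_apply_apply_self hsahalf]
  have hint : ∫ x, ‖⟪Tinv f, φ x⟫‖ ^ 2 ∂μ = ‖Tinvhalf f‖ ^ 2 := by
    exact_mod_cast hform.symm.trans hroot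
  have hlint : ∫⁻ x, (‖⟪Tinv f, φ x⟫‖₊ : ℝ≥0∞) ^ 2 ∂μ = ENNReal.ofReal (‖Tinvhalf f‖ ^ 2) := by
    rw [lintegral_nnnorm_sq_eq_ofReal_integral (hwm _) (hTdom g), hint]
  refine ⟨hlint, le_one_div_mul_sq_of_mul_sq_le_of_le_mul hm (b := ‖Tinv f‖) ?_ ?_⟩
  · exact (ENNReal.ofReal_le_ofReal_iff (by positivity)).mp (hlint ▸ hlow (Tinv f))
  · calc ‖Tinvhalf f‖ ^ 2 = ‖⟪f, Tinv f⟫‖ := by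
          rw [hroot, Complex.norm_real, Real.norm_of_nonneg (by positivity)]
      _ ≤ ‖f‖ * ‖Tinv f‖ := norm_inner_le_norm _ _

/-- for a lower semi-frame `φ` (bound `m`) with dense analysis domain and
generalized frame operator `T = C*C` (self-adjoint, realizing the form
`Ω(f,g) = ∫ ⟨f,φ_x⟩⟨φ_x,g⟩ dμ`), with bounded inverse `T⁻¹` and positive self-adjoint
square root `T^{-1/2}` of `T⁻¹`, the function `ψ = T⁻¹φ` is Bessel with bound `1/m`:
`∫ |⟨T⁻¹f, φ_x⟩|² dμ = ‖T^{-1/2}f‖² ≤ (1/m)‖f‖²` for every `f ∈ H`. -/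
theorem stmt8 {H X : Type*}
    [NormedAddCommGroup H] [InnerProductSpace ℂ H] [CompleteSpace H]
    [MeasurableSpace X] (μ : Measure X) (φ : X → H)
    (hwm : ∀ f : H, AEStronglyMeasurable (fun x => ⟪f, φ x⟫) μ)
    (m : ℝ) (hm : 0 < m)
    (hlow : ∀ f : H,
      ENNReal.ofReal (m * ‖f‖ ^ 2) ≤ ∫⁻ x, (‖⟪f, φ x⟫‖₊ : ℝ≥0∞) ^ 2 ∂μ)
    (hdense : Dense {f : H | ∫⁻ x, (‖⟪f, φ x⟫‖₊ : ℝ≥0∞) ^ 2 ∂μ < ∞})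
    (T : H →ₗ.[ℂ] H) (hsa : IsSelfAdjointPMap T)
    (hTdom : ∀ f : T.domain, ∫⁻ x, (‖⟪(f : H), φ x⟫‖₊ : ℝ≥0∞) ^ 2 ∂μ < ∞)
    (hT : ∀ (f : T.domain) (g : H), ∫⁻ x, (‖⟪g, φ x⟫‖₊ : ℝ≥0∞) ^ 2 ∂μ < ∞ →
      ⟪T f, g⟫ = ∫ x, ⟪(f : H), φ x⟫ * ⟪φ x, g⟫ ∂μ)
    (Tinv : H →L[ℂ] H)
    (hmem : ∀ g : H, Tinv g ∈ T.domain)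
    (hright : ∀ g : H, T ⟨Tinv g, hmem g⟩ = g)
    (hleft : ∀ f : T.domain, Tinv (T f) = (f : H))
    (Tinvhalf : H →L[ℂ] H) (hsahalf : IsSelfAdjoint Tinvhalf)
    (hposhalf : ∀ f : H, 0 ≤ (⟪Tinvhalf f, f⟫).re)
    (hsqr : ∀ f : H, Tinvhalf (Tinvhalf f) = Tinv f) :
    ∀ f : H,
      ∫⁻ x, (‖⟪Tinv f, φ x⟫‖₊ : ℝ≥0∞) ^ 2 ∂μ = ENNReal.ofReal (‖Tinvhalf f‖ ^ 2) ∧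
      ‖Tinvhalf f‖ ^ 2 ≤ (1 / m) * ‖f‖ ^ 2 :=
  stmt8_general μ φ hwm m hm hlow T hTdom hT Tinv hmem hright Tinvhalf hsahalf hsqr
end

section
/- Let φ be a lower semi-frame of H with dense analysis domain and generalized frame operator T = C_φ*C_φ. Then for every f in H, ∫_X |⟨f, T^{-1/2}φ_x⟩|² dμ(x) = ‖f‖², i.e., T^{-1/2}φ is a Parseval continuous frame of H (where ⟨f, T^{-1/2}φ_x⟩ is interpreted as ⟨T^{-1/2}f, φ_x⟩). -/
/-!
Write `S = T^{-1/2}`. Testing the defining identity of `T = C_φ^* C_φ` at `T⁻¹u` gives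
`∫ |⟨T⁻¹u, φ_x⟩|² dμ = ⟨u, T⁻¹u⟩ = ‖Su‖²`, which is the Parseval identity for `f = Su`; these `f`
form a dense subspace because `S` is self-adjoint and injective. The identity then extends to all
of `H`: Fatou's lemma along an approximating sequence gives `≤`, and with that bound in hand
Minkowski's inequality in `L²(μ)` gives `≥`.
-/

open MeasureTheory Filter Topology
open scoped ENNReal NNReal

local notation "⟪" x ", " y "⟫" => @inner ℂ _ _ x y

section LpNorm

variable {X E : Type*} [MeasurableSpace X] {μ : Measure X} [NormedAddCommGroup E]

theorem eLpNorm_two_sq (g : X → E) : eLpNorm g 2 μ ^ 2 = ∫⁻ x, ‖g x‖ₑ ^ 2 ∂μ := by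
  simpa using eLpNorm_nnreal_pow_eq_lintegral (μ := μ) (f := g) (p := 2) two_ne_zero

theorem eLpNorm_two_eq_enorm_iff {F : Type*} [NormedAddCommGroup F] {g : X → E} {v : F} :
    eLpNorm g 2 μ = ‖v‖ₑ ↔ ∫⁻ x, ‖g x‖ₑ ^ 2 ∂μ = ENNReal.ofReal (‖v‖ ^ 2) := by
  rw [← eLpNorm_two_sq, ENNReal.ofReal_pow (norm_nonneg _), ofReal_norm]
  exact (ENNReal.pow_right_strictMono two_ne_zero).injective.eq_iff.symm

theorem ofReal_integral_norm_sq {g : X → E} (hg : AEStronglyMeasurable g μ)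
    (hfin : ∫⁻ x, ‖g x‖ₑ ^ 2 ∂μ < ∞) :
    ENNReal.ofReal (∫ x, ‖g x‖ ^ 2 ∂μ) = ∫⁻ x, ‖g x‖ₑ ^ 2 ∂μ := by
  rw [integral_eq_lintegral_of_nonneg_ae (f := fun x ↦ ‖g x‖ ^ 2)
    (ae_of_all _ fun x ↦ by positivity) (by fun_prop)]
  simp_rw [ENNReal.ofReal_pow (norm_nonneg _), ofReal_norm]
  exact ENNReal.ofReal_toReal hfin.ne

end LpNorm

section DenseExtension

variable {H X E : Type*} [NormedAddCommGroup H] [MeasurableSpace X] {μ : Measure X}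
  [NormedAddCommGroup E] {p : ℝ≥0∞} {F : H → X → E} {D : Set H}

theorem eLpNorm_le_enorm_of_dense (hF : ∀ f, AEStronglyMeasurable (F f) μ)
    (hcont : ∀ x, Continuous fun f ↦ F f x) (hD : Dense D)
    (hle : ∀ f ∈ D, eLpNorm (F f) p μ ≤ ‖f‖ₑ) (f : H) :
    eLpNorm (F f) p μ ≤ ‖f‖ₑ := by
  obtain ⟨g, hgD, hgf⟩ := mem_closure_iff_seq_limit.mp (hD f)
  calc eLpNorm (F f) p μ ≤ atTop.liminf fun n ↦ eLpNorm (F (g n)) p μ :=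
        Lp.eLpNorm_lim_le_liminf_eLpNorm (fun n ↦ hF (g n)) (F f)
          (ae_of_all _ fun x ↦ ((hcont x).tendsto f).comp hgf)
    _ ≤ atTop.liminf fun n ↦ ‖g n‖ₑ :=
        liminf_le_liminf (Eventually.of_forall fun n ↦ hle _ (hgD n))
    _ = ‖f‖ₑ := ((continuous_enorm.tendsto f).comp hgf).liminf_eq

theorem eLpNorm_eq_enorm_of_dense [Fact (1 ≤ p)] (hF : ∀ f, AEStronglyMeasurable (F f) μ)
    (hadd : ∀ a b, F (a + b) = F a + F b) (hcont : ∀ x, Continuous fun f ↦ F f x)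
    (hD : Dense D) (heq : ∀ f ∈ D, eLpNorm (F f) p μ = ‖f‖ₑ) (f : H) :
    eLpNorm (F f) p μ = ‖f‖ₑ := by
  have hle := eLpNorm_le_enorm_of_dense hF hcont hD (fun g hg ↦ (heq g hg).le)
  refine le_antisymm (hle f) ?_
  have hmink : ∀ g ∈ D, ‖g‖ₑ ≤ eLpNorm (F f) p μ + ‖g - f‖ₑ := fun g hg ↦ calc
    ‖g‖ₑ = eLpNorm (F f + F (g - f)) p μ := by rw [← hadd, add_sub_cancel, heq g hg]
    _ ≤ eLpNorm (F f) p μ + eLpNorm (F (g - f)) p μ := eLpNorm_add_le (hF f) (hF _) Fact.out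
    _ ≤ eLpNorm (F f) p μ + ‖g - f‖ₑ := by gcongr; exact hle _
  have hclosed : IsClosed {g : H | ‖g‖ₑ ≤ eLpNorm (F f) p μ + ‖g - f‖ₑ} :=
    isClosed_le (by fun_prop) (by fun_prop)
  have hf : ‖f‖ₑ ≤ eLpNorm (F f) p μ + ‖f - f‖ₑ := by
    have := closure_minimal hmink hclosed
    rw [hD.closure_eq] at this
    exact this (Set.mem_univ f)
  rwa [sub_self, enorm_zero, add_zero] at hf

end DenseExtension

section SelfAdjoint

variable {H : Type*} [NormedAddCommGroup H] [InnerProductSpace ℂ H] [CompleteSpace H]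
  {S : H →L[ℂ] H}

theorem IsSelfAdjoint.denseRange_of_injective (hS : IsSelfAdjoint S)
    (hinj : Function.Injective S) : DenseRange S := by
  have : S.rangeᗮ = ⊥ := by
    rw [S.orthogonal_range, hS.adjoint_eq]
    exact LinearMap.ker_eq_bot.mpr hinj
  rwa [← Submodule.topologicalClosure_eq_top_iff,
    ← Submodule.dense_iff_topologicalClosure_eq_top, LinearMap.coe_range] at this

theorem IsSelfAdjoint.re_inner_apply_apply (hS : IsSelfAdjoint S) (u : H) :
    (⟪u, S (S u)⟫).re = ‖S u‖ ^ 2 := by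
  rw [← show ⟪S u, S u⟫ = ⟪u, S (S u)⟫ from hS.isSymmetric u (S u)]
  exact inner_self_eq_norm_sq (𝕜 := ℂ) _

end SelfAdjoint

theorem lintegral_enorm_inner_sq_eq_re_inner {H X : Type*} [NormedAddCommGroup H]
    [InnerProductSpace ℂ H] [MeasurableSpace X] {μ : Measure X} {φ : X → H}
    (hwm : ∀ f : H, AEStronglyMeasurable (fun x => ⟪f, φ x⟫) μ) {T : H →ₗ.[ℂ] H}
    (hTdom : ∀ f : T.domain, ∫⁻ x, ‖⟪(f : H), φ x⟫‖ₑ ^ 2 ∂μ < ∞)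
    (hT : ∀ (f : T.domain) (g : H), ∫⁻ x, ‖⟪g, φ x⟫‖ₑ ^ 2 ∂μ < ∞ →
      ⟪T f, g⟫ = ∫ x, ⟪(f : H), φ x⟫ * ⟪φ x, g⟫ ∂μ) (f : T.domain) :
    ∫⁻ x, ‖⟪(f : H), φ x⟫‖ₑ ^ 2 ∂μ = ENNReal.ofReal (⟪T f, f⟫).re := by
  have hsq : ∀ x, ⟪(f : H), φ x⟫ * ⟪φ x, f⟫ = ((‖⟪(f : H), φ x⟫‖ ^ 2 : ℝ) : ℂ) := fun x ↦ by
    rw [← inner_conj_symm (φ x) (f : H), Complex.mul_conj']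
    norm_cast
  rw [hT f f (hTdom f)]
  simp_rw [hsq, integral_complex_ofReal, Complex.ofReal_re]
  exact (ofReal_integral_norm_sq (hwm f) (hTdom f)).symm

theorem stmt9_general {H X : Type*}
    [NormedAddCommGroup H] [InnerProductSpace ℂ H] [CompleteSpace H]
    [MeasurableSpace X] (μ : Measure X) (φ : X → H)
    (hwm : ∀ f : H, AEStronglyMeasurable (fun x => ⟪f, φ x⟫) μ)
    (T : H →ₗ.[ℂ] H)
    (hTdom : ∀ f : T.domain, ∫⁻ x, (‖⟪(f : H), φ x⟫‖₊ : ℝ≥0∞) ^ 2 ∂μ < ∞)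
    (hT : ∀ (f : T.domain) (g : H), ∫⁻ x, (‖⟪g, φ x⟫‖₊ : ℝ≥0∞) ^ 2 ∂μ < ∞ →
      ⟪T f, g⟫ = ∫ x, ⟪(f : H), φ x⟫ * ⟪φ x, g⟫ ∂μ)
    (Tinv : H →L[ℂ] H)
    (hmem : ∀ g : H, Tinv g ∈ T.domain)
    (hright : ∀ g : H, T ⟨Tinv g, hmem g⟩ = g)
    (Tinvhalf : H →L[ℂ] H) (hsahalf : IsSelfAdjoint Tinvhalf)
    (hsqr : ∀ f : H, Tinvhalf (Tinvhalf f) = Tinv f) :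
    ∀ f : H,
      ∫⁻ x, (‖⟪Tinvhalf f, φ x⟫‖₊ : ℝ≥0∞) ^ 2 ∂μ = ENNReal.ofReal (‖f‖ ^ 2) := by
  have hinj : Function.Injective Tinvhalf := by
    refine Function.Injective.of_comp (f := Tinvhalf) fun a b hab ↦ ?_
    simpa only [hright] using congrArg T (Subtype.ext (by simpa [hsqr] using hab) :
      (⟨Tinv a, hmem a⟩ : T.domain) = ⟨Tinv b, hmem b⟩)
  have hrange (u : H) :
      eLpNorm (fun x ↦ ⟪Tinvhalf (Tinvhalf u), φ x⟫) 2 μ = ‖Tinvhalf u‖ₑ := by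
    rw [eLpNorm_two_eq_enorm_iff, hsqr,
      lintegral_enorm_inner_sq_eq_re_inner hwm hTdom hT ⟨Tinv u, hmem u⟩, hright]
    change ENNReal.ofReal (⟪u, Tinv u⟫).re = _
    rw [← hsqr, hsahalf.re_inner_apply_apply]
  intro f
  refine eLpNorm_two_eq_enorm_iff.mp ?_
  exact eLpNorm_eq_enorm_of_dense (p := 2) (F := fun f x ↦ ⟪Tinvhalf f, φ x⟫)
    (fun f ↦ hwm _) (fun a b ↦ by ext x; simp) (fun x ↦ by fun_prop)
    (hsahalf.denseRange_of_injective hinj) (by rintro _ ⟨u, rfl⟩; exact hrange u) f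

/-- for a lower semi-frame `φ` with dense analysis domain and generalized
frame operator `T = C*C` (self-adjoint, realizing `Ω(f,g) = ∫ ⟨f,φ_x⟩⟨φ_x,g⟩ dμ`), with
bounded inverse `T⁻¹` and positive self-adjoint square root `T^{-1/2}` of `T⁻¹`, the
function `T^{-1/2}φ` is a Parseval continuous frame:
`∫ |⟨T^{-1/2}f, φ_x⟩|² dμ = ‖f‖²` for every `f ∈ H`. -/
theorem stmt9 {H X : Type*}
    [NormedAddCommGroup H] [InnerProductSpace ℂ H] [CompleteSpace H]
    [MeasurableSpace X] (μ : Measure X) (φ : X → H)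
    (hwm : ∀ f : H, AEStronglyMeasurable (fun x => ⟪f, φ x⟫) μ)
    (m : ℝ) (hm : 0 < m)
    (hlow : ∀ f : H,
      ENNReal.ofReal (m * ‖f‖ ^ 2) ≤ ∫⁻ x, (‖⟪f, φ x⟫‖₊ : ℝ≥0∞) ^ 2 ∂μ)
    (hdense : Dense {f : H | ∫⁻ x, (‖⟪f, φ x⟫‖₊ : ℝ≥0∞) ^ 2 ∂μ < ∞})
    (T : H →ₗ.[ℂ] H) (hsa : IsSelfAdjointPMap T)
    (hTdom : ∀ f : T.domain, ∫⁻ x, (‖⟪(f : H), φ x⟫‖₊ : ℝ≥0∞) ^ 2 ∂μ < ∞)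
    (hT : ∀ (f : T.domain) (g : H), ∫⁻ x, (‖⟪g, φ x⟫‖₊ : ℝ≥0∞) ^ 2 ∂μ < ∞ →
      ⟪T f, g⟫ = ∫ x, ⟪(f : H), φ x⟫ * ⟪φ x, g⟫ ∂μ)
    (Tinv : H →L[ℂ] H)
    (hmem : ∀ g : H, Tinv g ∈ T.domain)
    (hright : ∀ g : H, T ⟨Tinv g, hmem g⟩ = g)
    (hleft : ∀ f : T.domain, Tinv (T f) = (f : H))
    (Tinvhalf : H →L[ℂ] H) (hsahalf : IsSelfAdjoint Tinvhalf)
    (hposhalf : ∀ f : H, 0 ≤ (⟪Tinvhalf f, f⟫).re)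
    (hsqr : ∀ f : H, Tinvhalf (Tinvhalf f) = Tinv f) :
    ∀ f : H,
      ∫⁻ x, (‖⟪Tinvhalf f, φ x⟫‖₊ : ℝ≥0∞) ^ 2 ∂μ = ENNReal.ofReal (‖f‖ ^ 2) :=
  stmt9_general μ φ hwm T hTdom hT Tinv hmem hright Tinvhalf hsahalf hsqr
end

section
/- Let φ be a lower semi-frame of H with dense analysis domain and generalized frame operator T, and let k, n ≥ 0 with k ≥ n. For all f ∈ D(Tⁿ), ∫_X |⟨Tⁿ f, Tⁿ T^{-k} φ_x⟩|² dμ(x) = ‖T^{2n - k + 1/2} f‖². Consequently T^{-k}φ is a Bessel mapping of the Hilbert space H(Tⁿ) (domain of Tⁿ with norm ‖Tⁿ·‖) if and only if k ≥ n + 1/2. -/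
open MeasureTheory
open scoped ENNReal NNReal

private lemma sq_nnnorm_mul_eq (t a : ℝ) (htp : 0 < t) (z : ℂ) :
    ((‖((t ^ a : ℝ) : ℂ) * z‖₊ : ℝ≥0∞)) ^ 2 = ENNReal.ofReal (t ^ (2 * a) * ‖z‖ ^ 2) := by
  rw [← enorm_eq_nnnorm, ← ofReal_norm, ← ENNReal.ofReal_pow (norm_nonneg _)]
  congr 1
  rw [norm_mul, Complex.norm_real, Real.norm_eq_abs,
    abs_of_pos (Real.rpow_pos_of_pos htp a), mul_pow]
  congr 1
  rw [← Real.rpow_natCast (t ^ a) 2, ← Real.rpow_mul htp.le]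
  norm_num [mul_comm]

private lemma exists_slice {Y : Type*} [MeasurableSpace Y] (ν : Measure Y) [SigmaFinite ν]
    (t : Y → ℝ) (ht : Measurable t) (M : ℝ) (hub : 0 < ν {y | M < t y}) :
    ∃ (E : Set Y) (M' : ℝ), MeasurableSet E ∧ 0 < ν E ∧ ν E < ∞ ∧
      ∀ y ∈ E, M < t y ∧ t y ≤ M' := by
  set A := {y | M < t y} with hA
  have hAmeas : MeasurableSet A := measurableSet_lt measurable_const ht
  have hcover : A ⊆ ⋃ j : ℕ, (A ∩ {y | t y ≤ M + j} ∩ spanningSets ν j) := by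
    intro y hy
    obtain ⟨j1, hj1⟩ := exists_nat_ge (t y - M)
    have hy2 : y ∈ ⋃ j, spanningSets ν j := by
      rw [iUnion_spanningSets]; trivial
    obtain ⟨j2, hj2⟩ := Set.mem_iUnion.mp hy2
    refine Set.mem_iUnion.mpr ⟨max j1 j2, ⟨⟨hy, ?_⟩, monotone_spanningSets ν (le_max_right j1 j2) hj2⟩⟩
    have : (j1 : ℝ) ≤ (max j1 j2 : ℕ) := by exact_mod_cast Nat.cast_le.mpr (le_max_left j1 j2)
    simp only [Set.mem_setOf_eq]
    linarith
  have hne : ∃ j : ℕ, ν (A ∩ {y | t y ≤ M + j} ∩ spanningSets ν j) ≠ 0 := by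
    by_contra h
    push_neg at h
    have : ν A = 0 := measure_mono_null hcover (measure_iUnion_null h)
    exact absurd this (ne_of_gt hub)
  obtain ⟨j, hj⟩ := hne
  refine ⟨A ∩ {y | t y ≤ M + j} ∩ spanningSets ν j, M + j,
    (hAmeas.inter (measurableSet_le ht measurable_const)).inter (measurableSet_spanningSets ν j),
    pos_iff_ne_zero.mpr hj, ?_, ?_⟩
  · exact lt_of_le_of_lt (measure_mono (by intro y hy; exact hy.2)) (measure_spanningSets_lt_top ν j)
  · rintro y ⟨⟨hy1, hy2⟩, -⟩
    exact ⟨hy1, hy2⟩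

/-- spectral model of Theorem 4.1(i) of the paper. `H = L²(ν)`, and the
generalized frame operator `T` of the lower semi-frame `φ` is multiplication by a measurable
function `t ≥ m > 0` which is essentially unbounded above (`T` positive self-adjoint,
`0 ∈ ρ(T)`, unbounded); powers `T^s` are multiplication by `t^s` (functional calculus).
The hypothesis `hT` says `∫_X |⟨g, φ_x⟩|² dμ = ‖T^{1/2} g‖²`, i.e. `T = C_φ*C_φ`; `hlow` is
the lower-semi-frame bound. Then for every `f ∈ D(Tⁿ)` one has
`∫_X |⟨Tⁿf, Tⁿ T^{-k}φ_x⟩_{H(Tⁿ)}|² dμ = ‖T^{2n-k+1/2} f‖²`, and `T^{-k}φ` is a Bessel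
mapping of `H(Tⁿ)` if and only if `k ≥ n + 1/2`. -/
theorem stmt10 {Y X : Type*} [MeasurableSpace Y] [MeasurableSpace X]
    (ν : Measure Y) [SigmaFinite ν] (μ : Measure X)
    (t : Y → ℝ) (ht : Measurable t)
    (m : ℝ) (hm : 0 < m) (hlowt : ∀ᵐ y ∂ν, m ≤ t y)
    (hub : ∀ M : ℝ, 0 < ν {y | M < t y})
    (φ : X → Y → ℂ) (hφ : ∀ x, MemLp (φ x) 2 ν)
    (hT : ∀ g : Y → ℂ, MemLp g 2 ν →
      ∫⁻ x, (‖∫ y, g y * (starRingEnd ℂ) (φ x y) ∂ν‖₊ : ℝ≥0∞) ^ 2 ∂μ =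
        ∫⁻ y, ENNReal.ofReal (t y) * (‖g y‖₊ : ℝ≥0∞) ^ 2 ∂ν)
    (hlow : ∀ g : Y → ℂ, MemLp g 2 ν →
      ENNReal.ofReal m * ∫⁻ y, (‖g y‖₊ : ℝ≥0∞) ^ 2 ∂ν ≤
        ∫⁻ x, (‖∫ y, g y * (starRingEnd ℂ) (φ x y) ∂ν‖₊ : ℝ≥0∞) ^ 2 ∂μ)
    (k n : ℝ) (hn : 0 ≤ n) (hkn : n ≤ k) :
    (∀ f : Y → ℂ, MemLp f 2 ν → MemLp (fun y => ((t y ^ n : ℝ) : ℂ) * f y) 2 ν →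
      ∫⁻ x, (‖∫ y, (((t y ^ n : ℝ) : ℂ) * f y) *
          (starRingEnd ℂ) (((t y ^ (n - k) : ℝ) : ℂ) * φ x y) ∂ν‖₊ : ℝ≥0∞) ^ 2 ∂μ =
        ∫⁻ y, (‖((t y ^ (2 * n - k + 1 / 2) : ℝ) : ℂ) * f y‖₊ : ℝ≥0∞) ^ 2 ∂ν) ∧
    ((∃ B : ℝ, 0 ≤ B ∧ ∀ f : Y → ℂ, MemLp f 2 ν →
        MemLp (fun y => ((t y ^ n : ℝ) : ℂ) * f y) 2 ν →
        ∫⁻ x, (‖∫ y, (((t y ^ n : ℝ) : ℂ) * f y) *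
            (starRingEnd ℂ) (((t y ^ (n - k) : ℝ) : ℂ) * φ x y) ∂ν‖₊ : ℝ≥0∞) ^ 2 ∂μ ≤
          ENNReal.ofReal B * ∫⁻ y, (‖((t y ^ n : ℝ) : ℂ) * f y‖₊ : ℝ≥0∞) ^ 2 ∂ν) ↔
      n + 1 / 2 ≤ k) := by
  have hrpow : ∀ c : ℝ, AEMeasurable (fun y => t y ^ c) ν := by
    intro c
    refine AEMeasurable.congr
      ((Real.measurable_exp.comp ((Real.measurable_log.comp ht).mul_const c)).aemeasurable) ?_
    filter_upwards [hlowt] with y hy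
    exact (Real.rpow_def_of_pos (lt_of_lt_of_le hm hy) c).symm
  have key : ∀ f : Y → ℂ, MemLp f 2 ν → MemLp (fun y => ((t y ^ n : ℝ) : ℂ) * f y) 2 ν →
      ∫⁻ x, (‖∫ y, (((t y ^ n : ℝ) : ℂ) * f y) *
          (starRingEnd ℂ) (((t y ^ (n - k) : ℝ) : ℂ) * φ x y) ∂ν‖₊ : ℝ≥0∞) ^ 2 ∂μ =
        ∫⁻ y, (‖((t y ^ (2 * n - k + 1 / 2) : ℝ) : ℂ) * f y‖₊ : ℝ≥0∞) ^ 2 ∂ν := by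
    intro f hf hnf
    set g : Y → ℂ := fun y => ((t y ^ (2 * n - k) : ℝ) : ℂ) * f y with hgdef
    have hgmeas : AEStronglyMeasurable g ν :=
      ((Complex.measurable_ofReal.comp_aemeasurable (hrpow (2 * n - k))).aestronglyMeasurable.mul
        hf.1)
    have hg : MemLp g 2 ν := by
      refine MemLp.of_le (hnf.const_mul ((m ^ (n - k) : ℝ) : ℂ)) hgmeas ?_
      filter_upwards [hlowt] with y hy
      have htp : 0 < t y := lt_of_lt_of_le hm hy
      have h1 : t y ^ (2 * n - k) = t y ^ (n - k) * t y ^ n := by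
        rw [← Real.rpow_add htp]; ring_nf
      have h2 : t y ^ (n - k) ≤ m ^ (n - k) :=
        Real.rpow_le_rpow_of_nonpos hm hy (by linarith)
      simp only [hgdef, norm_mul, Complex.norm_real, Real.norm_eq_abs,
        abs_of_pos (Real.rpow_pos_of_pos htp _), abs_of_pos (Real.rpow_pos_of_pos hm _)]
      calc t y ^ (2 * n - k) * ‖f y‖ = t y ^ (n - k) * (t y ^ n * ‖f y‖) := by rw [h1]; ring
        _ ≤ m ^ (n - k) * (t y ^ n * ‖f y‖) := by
            apply mul_le_mul_of_nonneg_right h2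
            positivity
    have hinner : ∀ x, ∫ y, (((t y ^ n : ℝ) : ℂ) * f y) *
        (starRingEnd ℂ) (((t y ^ (n - k) : ℝ) : ℂ) * φ x y) ∂ν
        = ∫ y, g y * (starRingEnd ℂ) (φ x y) ∂ν := by
      intro x
      refine integral_congr_ae ?_
      filter_upwards [hlowt] with y hy
      have htp : 0 < t y := lt_of_lt_of_le hm hy
      have h1 : ((t y ^ (2 * n - k) : ℝ) : ℂ) = ((t y ^ n : ℝ) : ℂ) * ((t y ^ (n - k) : ℝ) : ℂ) := by
        rw [← Complex.ofReal_mul, ← Real.rpow_add htp]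
        norm_num
        ring_nf
      simp only [hgdef, map_mul, Complex.conj_ofReal, h1]
      ring
    simp only [hinner]
    rw [hT g hg]
    refine lintegral_congr_ae ?_
    filter_upwards [hlowt] with y hy
    have htp : 0 < t y := lt_of_lt_of_le hm hy
    simp only [hgdef]
    rw [sq_nnnorm_mul_eq _ _ htp, sq_nnnorm_mul_eq _ _ htp,
      ← ENNReal.ofReal_mul htp.le, ← mul_assoc]
    congr 2
    rw [show (2 * (2 * n - k + 1 / 2)) = 1 + 2 * (2 * n - k) by ring,
      Real.rpow_add htp, Real.rpow_one]
  refine ⟨key, ?_, ?_⟩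
  · -- Bessel → k ≥ n + 1/2
    rintro ⟨B, hB, hbes⟩
    by_contra hlt
    push_neg at hlt
    set e : ℝ := n + 1 / 2 - k with hedef
    have he : 0 < e := by simp only [hedef]; linarith
    set M : ℝ := max m ((B + 1) ^ (1 / (2 * e))) with hMdef
    have hMm : m ≤ M := le_max_left _ _
    have hMpos : 0 < M := lt_of_lt_of_le hm hMm
    have hMB : B + 1 ≤ M ^ (2 * e) := by
      have h0 : (0:ℝ) < B + 1 := by linarith
      have h1 : ((B + 1) ^ (1 / (2 * e))) ^ (2 * e) = B + 1 := by
        rw [← Real.rpow_mul h0.le, one_div_mul_cancel (by positivity : (2:ℝ) * e ≠ 0),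
          Real.rpow_one]
      rw [← h1]
      exact Real.rpow_le_rpow (Real.rpow_nonneg h0.le _) (le_max_right _ _) (by positivity)
    obtain ⟨E, M', hEmeas, hEpos, hEfin, hE⟩ := exists_slice ν t ht M (hub M)
    set C : ℝ := max M' 1 with hCdef
    have hC1 : (1:ℝ) ≤ C := le_max_right _ _
    have hC0 : (0:ℝ) < C := lt_of_lt_of_le one_pos hC1
    have htC : ∀ y ∈ E, t y ≤ C := fun y hy => le_trans (hE y hy).2 (le_max_left _ _)
    set f : Y → ℂ := E.indicator (fun _ => (1:ℂ)) with hfdef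
    have hf : MemLp f 2 ν := memLp_indicator_const 2 hEmeas 1 (Or.inr hEfin.ne)
    have hnfmeas : AEStronglyMeasurable (fun y => ((t y ^ n : ℝ) : ℂ) * f y) ν :=
      (Complex.measurable_ofReal.comp_aemeasurable (hrpow n)).aestronglyMeasurable.mul hf.1
    have hnf : MemLp (fun y => ((t y ^ n : ℝ) : ℂ) * f y) 2 ν := by
      refine MemLp.of_le (memLp_indicator_const 2 hEmeas ((C ^ n : ℝ) : ℂ) (Or.inr hEfin.ne))
        hnfmeas ?_
      refine Filter.Eventually.of_forall fun y => ?_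
      by_cases hy : y ∈ E
      · have htp : 0 < t y := lt_of_lt_of_le hMpos (hE y hy).1.le
        simp only [hfdef, Set.indicator_of_mem hy, mul_one, Complex.norm_real,
          Real.norm_eq_abs, abs_of_pos (Real.rpow_pos_of_pos htp _),
          abs_of_pos (Real.rpow_pos_of_pos hC0 _)]
        exact Real.rpow_le_rpow htp.le (htC y hy) hn
      · simp [hfdef, Set.indicator_of_notMem hy]
    have hbesf := hbes f hf hnf
    rw [key f hf hnf] at hbesf
    set I : ℝ≥0∞ := ∫⁻ y, (‖((t y ^ n : ℝ) : ℂ) * f y‖₊ : ℝ≥0∞) ^ 2 ∂ν with hIdef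
    have hIub : I ≤ ENNReal.ofReal (C ^ (2 * n)) * ν E := by
      rw [hIdef, ← lintegral_indicator_const hEmeas]
      refine lintegral_mono fun y => ?_
      by_cases hy : y ∈ E
      · have htp : 0 < t y := lt_of_lt_of_le hMpos (hE y hy).1.le
        rw [Set.indicator_of_mem hy]
        simp only [hfdef, Set.indicator_of_mem hy]
        rw [sq_nnnorm_mul_eq _ _ htp]
        apply ENNReal.ofReal_le_ofReal
        simp only [norm_one, one_pow, mul_one]
        exact Real.rpow_le_rpow htp.le (htC y hy) (by positivity)
      · simp [hfdef, Set.indicator_of_notMem hy]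
    have hIlb : ENNReal.ofReal (m ^ (2 * n)) * ν E ≤ I := by
      rw [hIdef, ← lintegral_indicator_const hEmeas]
      refine lintegral_mono fun y => ?_
      by_cases hy : y ∈ E
      · have htm : m ≤ t y := le_trans hMm (hE y hy).1.le
        have htp : 0 < t y := lt_of_lt_of_le hm htm
        rw [Set.indicator_of_mem hy]
        simp only [hfdef, Set.indicator_of_mem hy]
        rw [sq_nnnorm_mul_eq _ _ htp]
        apply ENNReal.ofReal_le_ofReal
        simp only [norm_one, one_pow, mul_one]
        exact Real.rpow_le_rpow hm.le htm (by positivity)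
      · simp [hfdef, Set.indicator_of_notMem hy]
    have hI0 : I ≠ 0 := by
      intro h
      rw [h] at hIlb
      have : ENNReal.ofReal (m ^ (2 * n)) * ν E ≠ 0 := by
        apply mul_ne_zero
        · simp [ENNReal.ofReal_eq_zero, not_le]
          positivity
        · exact hEpos.ne'
      exact this (le_antisymm hIlb zero_le)
    have hItop : I ≠ ∞ :=
      (lt_of_le_of_lt hIub (ENNReal.mul_lt_top ENNReal.ofReal_lt_top hEfin)).ne
    have hlb : ENNReal.ofReal (M ^ (2 * e)) * I ≤
        ∫⁻ y, (‖((t y ^ (2 * n - k + 1 / 2) : ℝ) : ℂ) * f y‖₊ : ℝ≥0∞) ^ 2 ∂ν := by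
      rw [hIdef, ← lintegral_const_mul' _ _ ENNReal.ofReal_ne_top]
      refine lintegral_mono fun y => ?_
      by_cases hy : y ∈ E
      · have htM : M ≤ t y := (hE y hy).1.le
        have htp : 0 < t y := lt_of_lt_of_le hMpos htM
        simp only [hfdef, Set.indicator_of_mem hy]
        rw [sq_nnnorm_mul_eq _ _ htp, sq_nnnorm_mul_eq _ _ htp,
          ← ENNReal.ofReal_mul (Real.rpow_nonneg hMpos.le _)]
        apply ENNReal.ofReal_le_ofReal
        simp only [norm_one, one_pow, mul_one]
        have h1 : t y ^ (2 * (2 * n - k + 1 / 2)) = t y ^ (2 * e) * t y ^ (2 * n) := by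
          rw [← Real.rpow_add htp]
          congr 1
          simp only [hedef]; ring
        rw [h1]
        exact mul_le_mul_of_nonneg_right
          (Real.rpow_le_rpow hMpos.le htM (by positivity))
          (Real.rpow_nonneg htp.le _)
      · simp [hfdef, Set.indicator_of_notMem hy]
    have hfinal : ENNReal.ofReal (M ^ (2 * e)) * I ≤ ENNReal.ofReal B * I :=
      le_trans hlb hbesf
    rw [ENNReal.mul_le_mul_iff_left hI0 hItop] at hfinal
    have : M ^ (2 * e) ≤ B := by
      rwa [ENNReal.ofReal_le_ofReal_iff hB] at hfinal
    linarith
  · -- k ≥ n + 1/2 → Bessel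
    intro hk
    refine ⟨m ^ (2 * (n + 1 / 2 - k)), Real.rpow_nonneg hm.le _, fun f hf hnf => ?_⟩
    rw [key f hf hnf, ← lintegral_const_mul' _ _ ENNReal.ofReal_ne_top]
    refine lintegral_mono_ae ?_
    filter_upwards [hlowt] with y hy
    have htp : 0 < t y := lt_of_lt_of_le hm hy
    rw [sq_nnnorm_mul_eq _ _ htp, sq_nnnorm_mul_eq _ _ htp,
      ← ENNReal.ofReal_mul (Real.rpow_nonneg hm.le _)]
    apply ENNReal.ofReal_le_ofReal
    have h1 : t y ^ (2 * (2 * n - k + 1 / 2)) =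
        t y ^ (2 * (n + 1 / 2 - k)) * t y ^ (2 * n) := by
      rw [← Real.rpow_add htp]; ring_nf
    have h2 : t y ^ (2 * (n + 1 / 2 - k)) ≤ m ^ (2 * (n + 1 / 2 - k)) :=
      Real.rpow_le_rpow_of_nonpos hm hy (by linarith)
    calc t y ^ (2 * (2 * n - k + 1 / 2)) * ‖f y‖ ^ 2
        = t y ^ (2 * (n + 1 / 2 - k)) * (t y ^ (2 * n) * ‖f y‖ ^ 2) := by rw [h1]; ring
      _ ≤ m ^ (2 * (n + 1 / 2 - k)) * (t y ^ (2 * n) * ‖f y‖ ^ 2) := by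
          apply mul_le_mul_of_nonneg_right h2
          positivity
end

section
/- Let φ be a lower semi-frame of H with dense analysis domain and generalized frame operator T unbounded, and let k, n ≥ 0 with k ≥ n. Then T^{-k}φ is a lower semi-frame of H(Tⁿ) if and only if n ≤ k ≤ n + 1/2, and T^{-k}φ is a (Parseval) frame of H(Tⁿ) if and only if k = n + 1/2. -/
open MeasureTheory
open scoped ENNReal NNReal


lemma stmt11_exists_big {e : ℝ} (he : 0 < e) (c : ℝ) : ∃ M : ℝ, 1 ≤ M ∧ c < M ^ e := by
  refine ⟨max c 1 ^ e⁻¹ + 1, ?_, ?_⟩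
  · have : 0 ≤ max c 1 ^ e⁻¹ := Real.rpow_nonneg (le_trans zero_le_one (le_max_right c 1)) _
    linarith
  · have h0 : (0:ℝ) ≤ max c 1 := le_trans zero_le_one (le_max_right c 1)
    have h1 : (max c 1 ^ e⁻¹) ^ e < (max c 1 ^ e⁻¹ + 1) ^ e :=
      Real.rpow_lt_rpow (Real.rpow_nonneg h0 _) (by linarith) he
    rw [Real.rpow_inv_rpow h0 he.ne'] at h1
    exact lt_of_le_of_lt (le_max_left c 1) h1

lemma stmt11_exists_small {e c : ℝ} (he : e < 0) (hc : 0 < c) : ∃ M : ℝ, 1 ≤ M ∧ M ^ e < c := by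
  obtain ⟨M, hM1, hM⟩ := stmt11_exists_big (neg_pos.2 he) c⁻¹
  have hM0 : (0:ℝ) < M := lt_of_lt_of_le zero_lt_one hM1
  refine ⟨M, hM1, ?_⟩
  have h2 : M ^ e = (M ^ (-e))⁻¹ := by
    rw [show e = -(-e) by ring]
    rw [Real.rpow_neg hM0.le, neg_neg]
  rw [h2]
  calc (M ^ (-e))⁻¹ < (c⁻¹)⁻¹ := inv_strictAnti₀ (inv_pos.2 hc) hM
    _ = c := inv_inv c

lemma stmt11_setA {Y : Type*} [MeasurableSpace Y] (ν : Measure Y) [SigmaFinite ν]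
    (t : Y → ℝ) (ht : Measurable t) (hub : ∀ M : ℝ, 0 < ν {y | M < t y}) (M : ℝ) :
    ∃ A K, MeasurableSet A ∧ 0 < ν A ∧ ν A < ⊤ ∧ M ≤ K ∧ ∀ y ∈ A, M < t y ∧ t y ≤ K := by
  have hsub : {y | M < t y} ⊆ ⋃ j : ℕ, {y | M < t y ∧ t y ≤ M + (j + 1)} := by
    intro y hy
    obtain ⟨j, hj⟩ := exists_nat_ge (t y - M)
    exact Set.mem_iUnion.2 ⟨j, hy, by push_cast; linarith⟩
  have hj : ∃ j : ℕ, 0 < ν {y | M < t y ∧ t y ≤ M + (j + 1)} := by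
    by_contra h
    push_neg at h
    simp only [nonpos_iff_eq_zero] at h
    have h0 : ν {y | M < t y} = 0 :=
      le_antisymm (le_trans (measure_mono hsub) (measure_iUnion_null h).le) zero_le
    exact absurd h0 (hub M).ne'
  obtain ⟨j, hj⟩ := hj
  have hSm : MeasurableSet {y | M < t y ∧ t y ≤ M + (j + 1)} := by
    rw [Set.setOf_and]
    exact (measurableSet_lt measurable_const ht).inter (measurableSet_le ht measurable_const)
  obtain ⟨A, hAm, hAs, hA0, hAfin⟩ := MeasureTheory.Measure.exists_subset_measure_lt_top hSm hj
  exact ⟨A, M + (j + 1), hAm, hA0, hAfin, by linarith [Nat.cast_nonneg (α := ℝ) j], fun y hy => hAs hy⟩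


lemma stmt11_measurable_rpow (a : ℝ) : Measurable fun x : ℝ => x ^ a := by
  have h : (fun x : ℝ => x ^ a) = fun x =>
      if x = 0 then (if a = 0 then 1 else 0)
      else if 0 < x then Real.exp (Real.log x * a)
      else Real.exp (Real.log x * a) * Real.cos (a * Real.pi) := by
    funext x
    rcases eq_or_ne x 0 with rfl | hx
    · rcases eq_or_ne a 0 with rfl | ha
      · simp
      · simp [Real.zero_rpow ha, ha]
    · rcases lt_or_gt_of_ne hx with hneg | hpos
      · rw [if_neg hx, if_neg (not_lt.2 hneg.le), Real.rpow_def_of_neg hneg, mul_comm a]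
      · rw [if_neg hx, if_pos hpos, Real.rpow_def_of_pos hpos]
  rw [h]
  refine Measurable.ite (measurableSet_eq) measurable_const ?_
  refine Measurable.ite (measurableSet_lt measurable_const measurable_id) ?_ ?_
  · exact (Real.measurable_log.mul_const a).exp
  · exact ((Real.measurable_log.mul_const a).exp).mul_const _


lemma stmt11_coe {r : ℝ} (hr : 0 ≤ r) (z : ℂ) :
    (‖(r : ℂ) * z‖₊ : ℝ≥0∞) = ENNReal.ofReal r * (‖z‖₊ : ℝ≥0∞) := by
  rw [nnnorm_mul, ENNReal.coe_mul, Complex.nnnorm_real, ← enorm_eq_nnnorm, Real.enorm_eq_ofReal hr]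

lemma stmt11_key {Y X : Type*} [MeasurableSpace Y] [MeasurableSpace X]
    (ν : Measure Y) (μ : Measure X)
    (t : Y → ℝ) (ht : Measurable t)
    (m : ℝ) (hm : 0 < m) (hlowt : ∀ᵐ y ∂ν, m ≤ t y)
    (φ : X → Y → ℂ)
    (hT : ∀ g : Y → ℂ, MemLp g 2 ν →
      ∫⁻ x, (‖∫ y, g y * (starRingEnd ℂ) (φ x y) ∂ν‖₊ : ℝ≥0∞) ^ 2 ∂μ =
        ∫⁻ y, ENNReal.ofReal (t y) * (‖g y‖₊ : ℝ≥0∞) ^ 2 ∂ν)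
    (k n : ℝ) (hn : 0 ≤ n) (hkn : n ≤ k)
    (f : Y → ℂ) (hf : MemLp f 2 ν)
    (hfn : MemLp (fun y => ((t y ^ n : ℝ) : ℂ) * f y) 2 ν) :
    ∫⁻ x, (‖∫ y, (((t y ^ n : ℝ) : ℂ) * f y) *
        (starRingEnd ℂ) (((t y ^ (n - k) : ℝ) : ℂ) * φ x y) ∂ν‖₊ : ℝ≥0∞) ^ 2 ∂μ
      = ∫⁻ y, ENNReal.ofReal (t y ^ (1 + 2 * (n - k))) *
          (‖((t y ^ n : ℝ) : ℂ) * f y‖₊ : ℝ≥0∞) ^ 2 ∂ν := by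
  set a : ℝ := 2 * n - k with ha
  set e : ℝ := 1 + 2 * (n - k) with he
  set g : Y → ℂ := fun y => ((t y ^ a : ℝ) : ℂ) * f y with hgdef
  have hgm : AEStronglyMeasurable g ν :=
    ((Complex.measurable_ofReal.comp ((stmt11_measurable_rpow a).comp ht)).aestronglyMeasurable).mul hf.1
  have hg : MemLp g 2 ν := by
    refine MemLp.mono' (g := fun y => (1 + m ^ a) * ‖f y‖ + ‖((t y ^ n : ℝ) : ℂ) * f y‖)
      ((hf.norm.const_mul _).add hfn.norm) hgm ?_
    filter_upwards [hlowt] with y hy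
    have hty : 0 < t y := lt_of_lt_of_le hm hy
    have h1 : ‖g y‖ = t y ^ a * ‖f y‖ := by
      rw [hgdef]
      simp [norm_mul, Complex.norm_real, abs_of_nonneg (Real.rpow_nonneg hty.le a)]
    have h2 : ‖((t y ^ n : ℝ) : ℂ) * f y‖ = t y ^ n * ‖f y‖ := by
      simp [norm_mul, Complex.norm_real, abs_of_nonneg (Real.rpow_nonneg hty.le n)]
    rw [h1, h2]
    have hb : t y ^ a ≤ (1 + m ^ a) + t y ^ n := by
      rcases le_or_gt 0 a with ha0 | ha0
      · rcases le_or_gt 1 (t y) with h1t | h1t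
        · have : t y ^ a ≤ t y ^ n := Real.rpow_le_rpow_of_exponent_le h1t (by rw [ha]; linarith)
          have hma : 0 ≤ m ^ a := Real.rpow_nonneg hm.le a
          linarith
        · have h01 : t y ^ a ≤ 1 := Real.rpow_le_one hty.le h1t.le ha0
          have hma : 0 ≤ m ^ a := Real.rpow_nonneg hm.le a
          have htn : 0 ≤ t y ^ n := Real.rpow_nonneg hty.le n
          linarith
      · have hma : t y ^ a ≤ m ^ a := Real.rpow_le_rpow_of_nonpos hm hy ha0.le
        have htn : 0 ≤ t y ^ n := Real.rpow_nonneg hty.le n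
        linarith
    have := mul_le_mul_of_nonneg_right hb (norm_nonneg (f y))
    linarith [this]
  have hinner : ∀ x, (∫ y, (((t y ^ n : ℝ) : ℂ) * f y) *
      (starRingEnd ℂ) (((t y ^ (n - k) : ℝ) : ℂ) * φ x y) ∂ν)
      = ∫ y, g y * (starRingEnd ℂ) (φ x y) ∂ν := by
    intro x
    apply integral_congr_ae
    filter_upwards [hlowt] with y hy
    have hty : 0 < t y := lt_of_lt_of_le hm hy
    have hmul : t y ^ n * t y ^ (n - k) = t y ^ a := by
      rw [← Real.rpow_add hty, ha]; ring_nf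
    have : (((t y ^ n : ℝ) : ℂ) * f y) *
        (starRingEnd ℂ) (((t y ^ (n - k) : ℝ) : ℂ) * φ x y)
        = ((t y ^ n * t y ^ (n - k) : ℝ) : ℂ) * (f y * (starRingEnd ℂ) (φ x y)) := by
      rw [map_mul, Complex.conj_ofReal]; push_cast; ring
    rw [this, hmul, hgdef]; ring_nf
  calc ∫⁻ x, (‖∫ y, (((t y ^ n : ℝ) : ℂ) * f y) *
        (starRingEnd ℂ) (((t y ^ (n - k) : ℝ) : ℂ) * φ x y) ∂ν‖₊ : ℝ≥0∞) ^ 2 ∂μ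
      = ∫⁻ x, (‖∫ y, g y * (starRingEnd ℂ) (φ x y) ∂ν‖₊ : ℝ≥0∞) ^ 2 ∂μ := by
        exact lintegral_congr fun x => by rw [hinner x]
    _ = ∫⁻ y, ENNReal.ofReal (t y) * (‖g y‖₊ : ℝ≥0∞) ^ 2 ∂ν := hT g hg
    _ = ∫⁻ y, ENNReal.ofReal (t y ^ e) * (‖((t y ^ n : ℝ) : ℂ) * f y‖₊ : ℝ≥0∞) ^ 2 ∂ν := by
        apply lintegral_congr_ae
        filter_upwards [hlowt] with y hy
        have hty : 0 < t y := lt_of_lt_of_le hm hy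
        have h3 : ∀ p q : ℝ, t y ^ p * t y ^ q = t y ^ (p + q) :=
          fun p q => (Real.rpow_add hty p q).symm
        rw [hgdef]
        rw [stmt11_coe (Real.rpow_nonneg hty.le a), stmt11_coe (Real.rpow_nonneg hty.le n),
          mul_pow, mul_pow, sq (ENNReal.ofReal (t y ^ a)), sq (ENNReal.ofReal (t y ^ n)),
          ← ENNReal.ofReal_mul (Real.rpow_nonneg hty.le a),
          ← ENNReal.ofReal_mul (Real.rpow_nonneg hty.le n),
          ← mul_assoc, ← mul_assoc,
          ← ENNReal.ofReal_mul hty.le,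
          ← ENNReal.ofReal_mul (Real.rpow_nonneg hty.le e)]
        congr 2
        have h4 := h3 1 (a + a)
        rw [Real.rpow_one] at h4
        rw [h3 a a, h3 n n, h4, h3 e (n + n)]
        congr 1
        rw [ha, he]; ring

/-- spectral model of Theorem 4.1(ii)-(iii) of the paper. Same setting as
STATEMENT 10: `H = L²(ν)`, the generalized frame operator `T` of the lower semi-frame `φ`
is multiplication by `t ≥ m > 0`, essentially unbounded above, powers `T^s` = multiplication
by `t^s`. Then (for `0 ≤ n ≤ k`) `T^{-k}φ` is a lower semi-frame of `H(Tⁿ)` iff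
`n ≤ k ≤ n + 1/2`, it is a frame of `H(Tⁿ)` iff `k = n + 1/2`, and in that case it is a
Parseval frame of `H(Tⁿ)`. -/
theorem stmt11 {Y X : Type*} [MeasurableSpace Y] [MeasurableSpace X]
    (ν : Measure Y) [SigmaFinite ν] (μ : Measure X)
    (t : Y → ℝ) (ht : Measurable t)
    (m : ℝ) (hm : 0 < m) (hlowt : ∀ᵐ y ∂ν, m ≤ t y)
    (hub : ∀ M : ℝ, 0 < ν {y | M < t y})
    (φ : X → Y → ℂ) (hφ : ∀ x, MemLp (φ x) 2 ν)
    (hT : ∀ g : Y → ℂ, MemLp g 2 ν →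
      ∫⁻ x, (‖∫ y, g y * (starRingEnd ℂ) (φ x y) ∂ν‖₊ : ℝ≥0∞) ^ 2 ∂μ =
        ∫⁻ y, ENNReal.ofReal (t y) * (‖g y‖₊ : ℝ≥0∞) ^ 2 ∂ν)
    (hlow : ∀ g : Y → ℂ, MemLp g 2 ν →
      ENNReal.ofReal m * ∫⁻ y, (‖g y‖₊ : ℝ≥0∞) ^ 2 ∂ν ≤
        ∫⁻ x, (‖∫ y, g y * (starRingEnd ℂ) (φ x y) ∂ν‖₊ : ℝ≥0∞) ^ 2 ∂μ)
    (k n : ℝ) (hn : 0 ≤ n) (hkn : n ≤ k) :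
    ((∃ c : ℝ, 0 < c ∧ ∀ f : Y → ℂ, MemLp f 2 ν →
        MemLp (fun y => ((t y ^ n : ℝ) : ℂ) * f y) 2 ν →
        ENNReal.ofReal c * ∫⁻ y, (‖((t y ^ n : ℝ) : ℂ) * f y‖₊ : ℝ≥0∞) ^ 2 ∂ν ≤
          ∫⁻ x, (‖∫ y, (((t y ^ n : ℝ) : ℂ) * f y) *
            (starRingEnd ℂ) (((t y ^ (n - k) : ℝ) : ℂ) * φ x y) ∂ν‖₊ : ℝ≥0∞) ^ 2 ∂μ) ↔
      k ≤ n + 1 / 2) ∧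
    ((∃ c B : ℝ, 0 < c ∧ (∀ f : Y → ℂ, MemLp f 2 ν →
        MemLp (fun y => ((t y ^ n : ℝ) : ℂ) * f y) 2 ν →
        ENNReal.ofReal c * (∫⁻ y, (‖((t y ^ n : ℝ) : ℂ) * f y‖₊ : ℝ≥0∞) ^ 2 ∂ν) ≤
          ∫⁻ x, (‖∫ y, (((t y ^ n : ℝ) : ℂ) * f y) *
            (starRingEnd ℂ) (((t y ^ (n - k) : ℝ) : ℂ) * φ x y) ∂ν‖₊ : ℝ≥0∞) ^ 2 ∂μ ∧
        ∫⁻ x, (‖∫ y, (((t y ^ n : ℝ) : ℂ) * f y) *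
            (starRingEnd ℂ) (((t y ^ (n - k) : ℝ) : ℂ) * φ x y) ∂ν‖₊ : ℝ≥0∞) ^ 2 ∂μ ≤
          ENNReal.ofReal B * ∫⁻ y, (‖((t y ^ n : ℝ) : ℂ) * f y‖₊ : ℝ≥0∞) ^ 2 ∂ν)) ↔
      k = n + 1 / 2) ∧
    (k = n + 1 / 2 → ∀ f : Y → ℂ, MemLp f 2 ν →
        MemLp (fun y => ((t y ^ n : ℝ) : ℂ) * f y) 2 ν →
        ∫⁻ x, (‖∫ y, (((t y ^ n : ℝ) : ℂ) * f y) *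
            (starRingEnd ℂ) (((t y ^ (n - k) : ℝ) : ℂ) * φ x y) ∂ν‖₊ : ℝ≥0∞) ^ 2 ∂μ =
          ∫⁻ y, (‖((t y ^ n : ℝ) : ℂ) * f y‖₊ : ℝ≥0∞) ^ 2 ∂ν) := by
  have hkey := stmt11_key ν μ t ht m hm hlowt φ hT k n hn hkn
  set e : ℝ := 1 + 2 * (n - k) with he
  -- counterexample test functions
  have hcex : ∀ M : ℝ, 1 ≤ M → ∃ f : Y → ℂ, MemLp f 2 ν ∧
      MemLp (fun y => ((t y ^ n : ℝ) : ℂ) * f y) 2 ν ∧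
      0 < (∫⁻ y, (‖((t y ^ n : ℝ) : ℂ) * f y‖₊ : ℝ≥0∞) ^ 2 ∂ν) ∧
      (∫⁻ y, (‖((t y ^ n : ℝ) : ℂ) * f y‖₊ : ℝ≥0∞) ^ 2 ∂ν) < ⊤ ∧
      ∀ y, f y ≠ 0 → M < t y := by
    intro M hM
    obtain ⟨A, K, hAm, hA0, hAfin, hMK, hAP⟩ := stmt11_setA ν t ht hub M
    set f : Y → ℂ := Set.indicator A (fun _ => 1) with hfdef
    have hf : MemLp f 2 ν := memLp_indicator_const 2 hAm 1 (Or.inr hAfin.ne)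
    have hK0 : (0:ℝ) < K := lt_of_lt_of_le (lt_of_lt_of_le zero_lt_one hM) hMK
    have hfn : MemLp (fun y => ((t y ^ n : ℝ) : ℂ) * f y) 2 ν := by
      refine MemLp.mono' (g := fun y => K ^ n * ‖f y‖) (hf.norm.const_mul _) ?_ ?_
      · exact ((Complex.measurable_ofReal.comp
          ((stmt11_measurable_rpow n).comp ht)).aestronglyMeasurable).mul hf.1
      · refine Filter.Eventually.of_forall fun y => ?_
        by_cases hy : y ∈ A
        · have h1 := hAP y hy
          have ht0 : (0:ℝ) ≤ t y := le_of_lt (lt_of_lt_of_le zero_lt_one (hM.trans h1.1.le))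
          have h2 : t y ^ n ≤ K ^ n := Real.rpow_le_rpow ht0 h1.2 hn
          simp only [hfdef, Set.indicator_of_mem hy, norm_mul, Complex.norm_real,
            Real.norm_eq_abs, abs_of_nonneg (Real.rpow_nonneg ht0 n), norm_one, mul_one]
          exact h2
        · simp [hfdef, Set.indicator_of_notMem hy]
    have hIlow : ν A ≤ ∫⁻ y, (‖((t y ^ n : ℝ) : ℂ) * f y‖₊ : ℝ≥0∞) ^ 2 ∂ν := by
      rw [← lintegral_indicator_one hAm]
      refine lintegral_mono fun y => ?_
      by_cases hy : y ∈ A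
      · have h1 := hAP y hy
        have ht1 : (1:ℝ) ≤ t y := le_of_lt (lt_of_le_of_lt hM h1.1)
        have h2 : (1:ℝ≥0∞) ≤ ENNReal.ofReal (t y ^ n) := by
          rw [← ENNReal.ofReal_one]
          exact ENNReal.ofReal_le_ofReal (Real.one_le_rpow ht1 hn)
        simp only [hfdef, Set.indicator_of_mem hy, Pi.one_apply]
        rw [stmt11_coe (Real.rpow_nonneg (le_trans zero_le_one ht1) n)]
        calc (1:ℝ≥0∞) = 1 * 1 := (one_mul 1).symm
          _ ≤ ENNReal.ofReal (t y ^ n) * ENNReal.ofReal (t y ^ n) := mul_le_mul' h2 h2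
          _ = (ENNReal.ofReal (t y ^ n)) ^ 2 := (sq _).symm
          _ = (ENNReal.ofReal (t y ^ n) * (‖(1:ℂ)‖₊ : ℝ≥0∞)) ^ 2 := by simp
      · simp [hfdef, Set.indicator_of_notMem hy]
    have hIhigh : ∫⁻ y, (‖((t y ^ n : ℝ) : ℂ) * f y‖₊ : ℝ≥0∞) ^ 2 ∂ν ≤
        ENNReal.ofReal (K ^ n) ^ 2 * ν A := by
      rw [← lintegral_indicator_const hAm]
      refine lintegral_mono fun y => ?_
      by_cases hy : y ∈ A
      · have h1 := hAP y hy
        have ht0 : (0:ℝ) ≤ t y := le_of_lt (lt_of_lt_of_le zero_lt_one (hM.trans h1.1.le))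
        simp only [hfdef, Set.indicator_of_mem hy]
        rw [stmt11_coe (Real.rpow_nonneg ht0 n)]
        have h2 : ENNReal.ofReal (t y ^ n) ≤ ENNReal.ofReal (K ^ n) :=
          ENNReal.ofReal_le_ofReal (Real.rpow_le_rpow ht0 h1.2 hn)
        calc (ENNReal.ofReal (t y ^ n) * (‖(1:ℂ)‖₊ : ℝ≥0∞)) ^ 2
            = ENNReal.ofReal (t y ^ n) ^ 2 := by simp
          _ ≤ ENNReal.ofReal (K ^ n) ^ 2 := pow_le_pow_left' h2 2
      · simp [hfdef, Set.indicator_of_notMem hy]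
    refine ⟨f, hf, hfn, lt_of_lt_of_le hA0 hIlow, lt_of_le_of_lt hIhigh ?_, fun y hy => ?_⟩
    · exact ENNReal.mul_lt_top (ENNReal.pow_lt_top ENNReal.ofReal_lt_top) hAfin
    · by_cases hyA : y ∈ A
      · exact (hAP y hyA).1
      · exact absurd (by simp [hfdef, Set.indicator_of_notMem hyA]) hy
  -- lower frame bound forces k ≤ n + 1/2
  have hforce_le : (∃ c : ℝ, 0 < c ∧ ∀ f : Y → ℂ, MemLp f 2 ν →
        MemLp (fun y => ((t y ^ n : ℝ) : ℂ) * f y) 2 ν →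
        ENNReal.ofReal c * ∫⁻ y, (‖((t y ^ n : ℝ) : ℂ) * f y‖₊ : ℝ≥0∞) ^ 2 ∂ν ≤
          ∫⁻ x, (‖∫ y, (((t y ^ n : ℝ) : ℂ) * f y) *
            (starRingEnd ℂ) (((t y ^ (n - k) : ℝ) : ℂ) * φ x y) ∂ν‖₊ : ℝ≥0∞) ^ 2 ∂μ) →
      k ≤ n + 1 / 2 := by
    rintro ⟨c, hc, hcf⟩
    by_contra hgt
    push_neg at hgt
    have hee : e < 0 := by rw [he]; linarith
    obtain ⟨M, hM1, hMe⟩ := stmt11_exists_small hee hc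
    obtain ⟨f, hf, hfn, hI0, hIfin, hsupp⟩ := hcex M hM1
    have h1 := hcf f hf hfn
    rw [hkey f hf hfn] at h1
    have h2 : ∫⁻ y, ENNReal.ofReal (t y ^ e) *
        (‖((t y ^ n : ℝ) : ℂ) * f y‖₊ : ℝ≥0∞) ^ 2 ∂ν ≤
        ENNReal.ofReal (M ^ e) * ∫⁻ y, (‖((t y ^ n : ℝ) : ℂ) * f y‖₊ : ℝ≥0∞) ^ 2 ∂ν := by
      rw [← lintegral_const_mul' _ _ ENNReal.ofReal_ne_top]
      refine lintegral_mono fun y => ?_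
      by_cases hfy : f y = 0
      · simp [hfy]
      · have hMt := hsupp y hfy
        have h3 : t y ^ e ≤ M ^ e :=
          Real.rpow_le_rpow_of_nonpos (lt_of_lt_of_le zero_lt_one hM1) hMt.le hee.le
        exact mul_le_mul_left (ENNReal.ofReal_le_ofReal h3) _
    have h4 : ENNReal.ofReal c ≤ ENNReal.ofReal (M ^ e) :=
      (ENNReal.mul_le_mul_iff_left hI0.ne' hIfin.ne).1 (le_trans h1 h2)
    have h5 : c ≤ M ^ e := (ENNReal.ofReal_le_ofReal_iff
      (Real.rpow_nonneg (by linarith) e)).1 h4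
    linarith
  -- upper frame bound forces n + 1/2 ≤ k
  have hforce_ge : ∀ B : ℝ, (∀ f : Y → ℂ, MemLp f 2 ν →
        MemLp (fun y => ((t y ^ n : ℝ) : ℂ) * f y) 2 ν →
        ∫⁻ x, (‖∫ y, (((t y ^ n : ℝ) : ℂ) * f y) *
            (starRingEnd ℂ) (((t y ^ (n - k) : ℝ) : ℂ) * φ x y) ∂ν‖₊ : ℝ≥0∞) ^ 2 ∂μ ≤
          ENNReal.ofReal B * ∫⁻ y, (‖((t y ^ n : ℝ) : ℂ) * f y‖₊ : ℝ≥0∞) ^ 2 ∂ν) →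
      n + 1 / 2 ≤ k := by
    intro B hcf
    by_contra hgt
    push_neg at hgt
    have hee : 0 < e := by rw [he]; linarith
    obtain ⟨M, hM1, hMe⟩ := stmt11_exists_big hee (max B 1)
    obtain ⟨f, hf, hfn, hI0, hIfin, hsupp⟩ := hcex M hM1
    have h1 := hcf f hf hfn
    rw [hkey f hf hfn] at h1
    have h2 : ENNReal.ofReal (M ^ e) * ∫⁻ y, (‖((t y ^ n : ℝ) : ℂ) * f y‖₊ : ℝ≥0∞) ^ 2 ∂ν ≤
        ∫⁻ y, ENNReal.ofReal (t y ^ e) * (‖((t y ^ n : ℝ) : ℂ) * f y‖₊ : ℝ≥0∞) ^ 2 ∂ν := by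
      rw [← lintegral_const_mul' _ _ ENNReal.ofReal_ne_top]
      refine lintegral_mono fun y => ?_
      by_cases hfy : f y = 0
      · simp [hfy]
      · have hMt := hsupp y hfy
        have h3 : M ^ e ≤ t y ^ e :=
          Real.rpow_le_rpow (by linarith) hMt.le hee.le
        exact mul_le_mul_left (ENNReal.ofReal_le_ofReal h3) _
    have h4 : ENNReal.ofReal (M ^ e) ≤ ENNReal.ofReal (max B 1) :=
      le_trans ((ENNReal.mul_le_mul_iff_left hI0.ne' hIfin.ne).1 (le_trans h2 h1))
        (ENNReal.ofReal_le_ofReal (le_max_left B 1))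
    have h5 : M ^ e ≤ max B 1 := (ENNReal.ofReal_le_ofReal_iff
      (le_trans zero_le_one (le_max_right B 1))).1 h4
    linarith
  -- Parseval part
  have hpars : k = n + 1 / 2 → ∀ f : Y → ℂ, MemLp f 2 ν →
      MemLp (fun y => ((t y ^ n : ℝ) : ℂ) * f y) 2 ν →
      ∫⁻ x, (‖∫ y, (((t y ^ n : ℝ) : ℂ) * f y) *
          (starRingEnd ℂ) (((t y ^ (n - k) : ℝ) : ℂ) * φ x y) ∂ν‖₊ : ℝ≥0∞) ^ 2 ∂μ =
        ∫⁻ y, (‖((t y ^ n : ℝ) : ℂ) * f y‖₊ : ℝ≥0∞) ^ 2 ∂ν := by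
    intro hk f hf hfn
    rw [hkey f hf hfn]
    refine lintegral_congr fun y => ?_
    have h0 : e = 0 := by rw [he, hk]; ring
    rw [h0, Real.rpow_zero, ENNReal.ofReal_one, one_mul]
  refine ⟨⟨hforce_le, ?_⟩, ⟨?_, ?_⟩, hpars⟩
  · -- k ≤ n + 1/2 gives lower semi-frame with constant m^e
    intro hk
    have hee : 0 ≤ e := by rw [he]; linarith
    refine ⟨m ^ e, Real.rpow_pos_of_pos hm e, fun f hf hfn => ?_⟩
    rw [hkey f hf hfn, ← lintegral_const_mul' _ _ ENNReal.ofReal_ne_top]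
    refine lintegral_mono_ae ?_
    filter_upwards [hlowt] with y hy
    exact mul_le_mul_left (ENNReal.ofReal_le_ofReal (Real.rpow_le_rpow hm.le hy hee)) _
  · rintro ⟨c, B, hc, hcf⟩
    have h1 := hforce_le ⟨c, hc, fun f hf hfn => (hcf f hf hfn).1⟩
    have h2 := hforce_ge B fun f hf hfn => (hcf f hf hfn).2
    linarith
  · intro hk
    refine ⟨1, 1, one_pos, fun f hf hfn => ?_⟩
    rw [hpars hk f hf hfn]
    constructor <;> simp [ENNReal.ofReal_one]
end

section
/- Let {e_n}_{n≥1} be an orthonormal basis of H and define φ_n = e_1 + e_n for n ≥ 2. Then the set D(C_φ) = {f ∈ H : Σ_{n≥2} |⟨f, φ_n⟩|² < ∞} equals the orthogonal complement of e_1, and in particular D(C_φ) is not dense in H. -/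
local notation "⟪" x ", " y "⟫" => @inner ℂ _ _ x y

/-- if `{e_n}` is an orthonormal basis of `H` and `φ_n = e_1 + e_n` for
`n ≥ 2`, then the analysis domain `D(C_φ) = {f : Σ_{n≥2} |⟨f, φ_n⟩|² < ∞}` equals the
orthogonal complement of `e_1`; in particular `D(C_φ)` is not dense in `H`. -/
theorem stmt15 {H : Type*}
    [NormedAddCommGroup H] [InnerProductSpace ℂ H] [CompleteSpace H]
    (e : ℕ → H) (he : Orthonormal ℂ e)
    (htotal : Dense (Submodule.span ℂ (Set.range e) : Set H)) :
    {f : H | Summable (fun n : {m : ℕ // 2 ≤ m} => ‖⟪f, e 1 + e (n : ℕ)⟫‖ ^ 2)} =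
      {f : H | ⟪e 1, f⟫ = 0} ∧
    ¬ Dense {f : H | Summable (fun n : {m : ℕ // 2 ≤ m} => ‖⟪f, e 1 + e (n : ℕ)⟫‖ ^ 2)} := by
  haveI : Infinite {m : ℕ // 2 ≤ m} := Infinite.of_injective
    (fun k => ⟨k + 2, by omega⟩) (fun a b h => by simpa using h)
  have key : {f : H | Summable (fun n : {m : ℕ // 2 ≤ m} => ‖⟪f, e 1 + e (n : ℕ)⟫‖ ^ 2)} =
      {f : H | ⟪e 1, f⟫ = 0} := by
    ext f
    simp only [Set.mem_setOf_eq]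
    have hBessel : Summable (fun n : ℕ => ‖⟪f, e n⟫‖ ^ 2) := by
      have := he.inner_products_summable (x := f)
      simpa [norm_inner_symm] using this
    constructor
    · intro hs
      -- limits along cofinite on the subtype
      have hc0 : Filter.Tendsto (fun n : {m : ℕ // 2 ≤ m} => ⟪f, e (n : ℕ)⟫)
          Filter.cofinite (nhds 0) := by
        have h1 : Filter.Tendsto (fun n : ℕ => ‖⟪f, e n⟫‖ ^ 2) Filter.cofinite (nhds 0) :=
          hBessel.tendsto_cofinite_zero
        have h2 : Filter.Tendsto (fun n : ℕ => ⟪f, e n⟫) Filter.cofinite (nhds 0) := by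
          rw [tendsto_zero_iff_norm_tendsto_zero]
          have := h1.sqrt
          simpa [Real.sqrt_sq (norm_nonneg _)] using this
        exact h2.comp (Subtype.coe_injective.tendsto_cofinite)
      have hterm0 : Filter.Tendsto
          (fun n : {m : ℕ // 2 ≤ m} => ‖⟪f, e 1 + e (n : ℕ)⟫‖ ^ 2)
          Filter.cofinite (nhds 0) := hs.tendsto_cofinite_zero
      have htermA : Filter.Tendsto
          (fun n : {m : ℕ // 2 ≤ m} => ‖⟪f, e 1 + e (n : ℕ)⟫‖ ^ 2)
          Filter.cofinite (nhds (‖⟪f, e 1⟫‖ ^ 2)) := by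
        have : Filter.Tendsto (fun n : {m : ℕ // 2 ≤ m} => ⟪f, e 1⟫ + ⟪f, e (n : ℕ)⟫)
            Filter.cofinite (nhds (⟪f, e 1⟫ + 0)) := tendsto_const_nhds.add hc0
        simp only [inner_add_right]
        simpa using ((this.norm).pow 2)
      have : ‖⟪f, e 1⟫‖ ^ 2 = 0 := tendsto_nhds_unique htermA hterm0
      have h0 : ⟪f, e 1⟫ = 0 := by
        have := pow_eq_zero_iff (n := 2) (by norm_num) |>.mp this
        simpa using this
      rwa [← inner_eq_zero_symm]
    · intro h0
      have hf0 : ⟪f, e 1⟫ = 0 := by rwa [inner_eq_zero_symm]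
      have : (fun n : {m : ℕ // 2 ≤ m} => ‖⟪f, e 1 + e (n : ℕ)⟫‖ ^ 2) =
          fun n : {m : ℕ // 2 ≤ m} => ‖⟪f, e (n : ℕ)⟫‖ ^ 2 := by
        funext n
        simp [inner_add_right, hf0]
      rw [this]
      exact hBessel.comp_injective Subtype.coe_injective
  refine ⟨key, ?_⟩
  rw [key]
  intro hd
  have hclosed : IsClosed {f : H | ⟪e 1, f⟫ = 0} := by
    have : {f : H | ⟪e 1, f⟫ = 0} = (innerSL ℂ (e 1)) ⁻¹' {0} := rfl
    rw [this]
    exact isClosed_singleton.preimage (innerSL ℂ (e 1)).continuous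
  have huniv : {f : H | ⟪e 1, f⟫ = 0} = Set.univ := by
    rw [← hclosed.closure_eq, hd.closure_eq]
  have hmem : ⟪e 1, e 1⟫ = 0 := by
    have : e 1 ∈ {f : H | ⟪e 1, f⟫ = 0} := huniv ▸ Set.mem_univ (e 1)
    exact this
  have h1 : ⟪e 1, e 1⟫ = 1 := by
    simpa using (orthonormal_iff_ite.mp he) 1 1
  rw [hmem] at h1
  exact zero_ne_one h1
end
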